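/- arXiv:2506.06109 — 5 statements merged into one kernel-verified Lean document; each statement's English description precedes it below -/
import Mathlib

section
/- Let M be a finite matroid and let x, y ∈ E(M) satisfy: both Z_x ∖ Z_y and Z_y ∖ Z_x are nonempty, and for every X ∈ Z_x ∖ Z_y and Y ∈ Z_y ∖ Z_x the pair (X, Y) is not modular (where Z_e = {F ∈ Z(M) : e ∈ F}). Let M' be the matroid on E(M) whose cyclic flats are (Z(M) ∖ (Z_y ∖ Z_x)) ∪ {(Y ∖ {y}) ∪ {x} : Y ∈ Z_y ∖ Z_x}, with r_{M'}(F) = r_M(F) for F ∈ Z(M) ∖ (Z_y ∖ Z_x) and r_{M'}((Y ∖ {y}) ∪ {x}) = r_M(Y), and let M'' be the matroid obtained from the same construction with the roles of x and y interchanged. Then the transposition of E(M) that exchanges x and y and fixes all other elements is an isomorphism of M' onto M''. -/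
/-!
A finite matroid is determined by its cyclic flats and their ranks: a set `I` is independent
exactly when `|I ∩ F| ≤ r(F)` for every cyclic flat `F`, because a circuit `C ⊆ I` spans a
cyclic flat of rank `|C| - 1`. Hence a bijection of ground sets that carries the cyclic flats
of one matroid onto those of the other, preserving rank, is an isomorphism. The transposition
of `x` and `y` is such a bijection from `M'` to `M''`: each cyclic flat of either matroid comes
from a cyclic flat `F` of `M`, and the transposition takes the version of `F` in `M'` to its
version in `M''`.
-/

open Set Matroid

namespace Paper

variable {α : Type*} {β : Type*}

/-- The rank of a set in a matroid: the largest cardinality of an independent subset. -/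
noncomputable def rnk (M : Matroid α) (X : Set α) : ℕ :=
  sSup {n | ∃ I, M.Indep I ∧ I ⊆ X ∧ I.ncard = n}

/-- A coloop: an element contained in every base. -/
def IsColoop (M : Matroid α) (e : α) : Prop := ∀ B, M.IsBase B → e ∈ B

/-- A cyclic flat: a flat whose restriction has no coloops. -/
def CyclicFlat (M : Matroid α) (F : Set α) : Prop :=
  M.IsFlat F ∧ ∀ e ∈ F, ¬ IsColoop (M ↾ F) e

/-- A modular pair of sets. -/
def ModularPair (M : Matroid α) (X Y : Set α) : Prop :=
  rnk M X + rnk M Y = rnk M (X ∪ Y) + rnk M (X ∩ Y)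

/-- Two matroids have the same configuration: there is an inclusion-order isomorphism
between their collections of cyclic flats preserving size and rank. -/
def SameConfig (M : Matroid α) (N : Matroid β) : Prop :=
  ∃ φ : {F : Set α // CyclicFlat M F} ≃o {F : Set β // CyclicFlat N F},
    ∀ F : {F : Set α // CyclicFlat M F},
      (φ F : Set β).ncard = (F : Set α).ncard ∧ rnk N (φ F : Set β) = rnk M (F : Set α)

/-- Matroid isomorphism: a bijection between ground sets mapping independent sets
onto independent sets. -/
def IsIso (M : Matroid α) (N : Matroid β) : Prop :=
  ∃ f : α → β, Set.BijOn f M.E N.E ∧ ∀ I ⊆ M.E, (M.Indep I ↔ N.Indep (f '' I))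

/-- A matroid is configuration unique if every (finite) matroid with the same
configuration is isomorphic to it. -/
def ConfigUnique (M : Matroid α) : Prop :=
  ∀ {γ : Type*} (N : Matroid γ), N.Finite → SameConfig M N → IsIso M N

/-- A circuit: a minimal dependent set. -/
def IsCircuit (M : Matroid α) (C : Set α) : Prop :=
  C ⊆ M.E ∧ ¬ M.Indep C ∧ ∀ x ∈ C, M.Indep (C \ {x})

/-- A matroid is connected if its ground set is nonempty and any two distinct
elements lie in a common circuit. -/
def MatConnected (M : Matroid α) : Prop :=
  M.E.Nonempty ∧ ∀ ⦃e f⦄, e ∈ M.E → f ∈ M.E → e ≠ f → ∃ C, IsCircuit M C ∧ e ∈ C ∧ f ∈ C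

/-- The connected component of `e`: all elements sharing a circuit with `e` (plus `e`). -/
def component (M : Matroid α) (e : α) : Set α :=
  {f ∈ M.E | e = f ∨ ∃ C, IsCircuit M C ∧ e ∈ C ∧ f ∈ C}

/-- `(A 1, …, A r)` is a presentation of the transversal matroid `M`: the independent
sets of `M` are exactly the partial transversals. -/
def IsPresentation (M : Matroid α) (r : ℕ) (A : ℕ → Set α) : Prop :=
  (∀ i ∈ Set.Icc 1 r, A i ⊆ M.E) ∧
  ∀ I : Set α, M.Indep I ↔ I ⊆ M.E ∧ ∃ φ : α → ℕ, Set.InjOn φ I ∧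
    ∀ x ∈ I, φ x ∈ Set.Icc 1 r ∧ x ∈ A (φ x)

/-- A transversal matroid. -/
def IsTransversalMatroid (M : Matroid α) : Prop := ∃ r A, IsPresentation M r A

/-- A fundamental (principal) transversal matroid: one with a presentation in which each
set has an element belonging to no other set. -/
def IsFundamental (M : Matroid α) : Prop :=
  ∃ (r : ℕ) (A : ℕ → Set α), IsPresentation M r A ∧
    ∀ i ∈ Set.Icc 1 r, ∃ e ∈ A i, ∀ j ∈ Set.Icc 1 r, j ≠ i → e ∉ A j

/-- `M` is the lattice path matroid `M[P,Q]` on `[n]` determined by the positions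
`l 1 < ⋯ < l r` of the north steps of the upper path and `u 1 < ⋯ < u r` of those of the
lower path: the transversal matroid on `[n]` presented by the intervals `N i = [l i, u i]`. -/
def IsLPM (n r : ℕ) (l u : ℕ → ℕ) (M : Matroid ℕ) : Prop :=
  1 ≤ r ∧ r ≤ n ∧
  StrictMonoOn l (Set.Icc 1 r) ∧ StrictMonoOn u (Set.Icc 1 r) ∧
  (∀ i ∈ Set.Icc 1 r, l i ∈ Set.Icc 1 n ∧ u i ∈ Set.Icc 1 n ∧ l i ≤ u i) ∧
  M.E = Set.Icc 1 n ∧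
  IsPresentation M r (fun i => Set.Icc (l i) (u i))

/-- A lattice path matroid: any matroid isomorphic to some `M[P,Q]`. -/
def IsLatticePathMatroid (M : Matroid α) : Prop :=
  ∃ (n r : ℕ) (l u : ℕ → ℕ) (M₀ : Matroid ℕ), IsLPM n r l u M₀ ∧ IsIso M₀ M

/-- `[a] = {1, …, a}` is an initial connected flat: `a ∉ {l 1, …, l r}` and
`a + 1 ∈ {l 1, …, l r}`. -/
def InitialFlat (r : ℕ) (l : ℕ → ℕ) (a : ℕ) : Prop :=
  (∀ i ∈ Set.Icc 1 r, l i ≠ a) ∧ ∃ i ∈ Set.Icc 1 r, l i = a + 1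

/-- `[b, n]` is a final connected flat: `b - 1 ∈ {u 1, …, u r}` and
`b ∉ {u 1, …, u r}`. -/
def FinalFlat (r : ℕ) (u : ℕ → ℕ) (b : ℕ) : Prop :=
  (∃ i ∈ Set.Icc 1 r, u i = b - 1) ∧ ∀ i ∈ Set.Icc 1 r, u i ≠ b

/-- The pair `([a], [b,n])` is mixed: `a₁ < b₁` and `a₂ > b₂`, where
`a₂ = #{i : l i ≤ a}`, `a₁ = a - a₂`, `b₂ = #{i : u i ≤ b-1}`, `b₁ = b - 1 - b₂`. -/
def Mixed (r : ℕ) (l u : ℕ → ℕ) (a b : ℕ) : Prop :=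
  a - {i ∈ Set.Icc 1 r | l i ≤ a}.ncard
      < (b - 1) - {i ∈ Set.Icc 1 r | u i ≤ b - 1}.ncard ∧
  {i ∈ Set.Icc 1 r | u i ≤ b - 1}.ncard < {i ∈ Set.Icc 1 r | l i ≤ a}.ncard

/-- A set of integers is an interval (order-convex set). -/
def IsInterval (S : Set ℕ) : Prop :=
  ∀ x ∈ S, ∀ y ∈ S, ∀ z, x ≤ z → z ≤ y → z ∈ S

/-- `R` is the rook matroid `R[P,Q]` on `[n]`: the transversal matroid presented by
`A i = {i} ∪ {r + j : l i - i + 1 ≤ j ≤ u i - i}`. -/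
def IsRook (n r : ℕ) (l u : ℕ → ℕ) (R : Matroid ℕ) : Prop :=
  R.E = Set.Icc 1 n ∧
  IsPresentation R r
    (fun i => insert i ((fun j => r + j) '' Set.Icc (l i - i + 1) (u i - i)))

/-- `M = N +_X e` is the principal extension of `N` adding `e` freely to `X`. -/
def IsPrincipalExt (N : Matroid α) (X : Set α) (e : α) (M : Matroid α) : Prop :=
  M.E = insert e N.E ∧ ∀ Z ⊆ N.E,
    rnk M Z = rnk N Z ∧
    (X ⊆ N.closure Z → rnk M (insert e Z) = rnk N Z) ∧
    (¬ X ⊆ N.closure Z → rnk M (insert e Z) = rnk N Z + 1)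

section Rank

variable {M : Matroid α} {I X : Set α}

lemma rnk_eq_ncard_of_isBasis' [M.RankFinite] (hI : M.IsBasis' I X) : rnk M X = I.ncard := by
  refine IsGreatest.csSup_eq ⟨⟨I, hI.indep, hI.subset, rfl⟩, ?_⟩
  rintro _ ⟨J, hJ, hJX, rfl⟩
  have hJI : J.encard ≤ I.encard := hI.encard_eq_eRk ▸ hJ.encard_le_eRk_of_subset hJX
  rwa [← hJ.finite.cast_ncard_eq, ← hI.indep.finite.cast_ncard_eq, Nat.cast_le] at hJI

lemma ncard_le_rnk_of_indep [M.RankFinite] (hI : M.Indep I) (hIX : I ⊆ X) :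
    I.ncard ≤ rnk M X := by
  obtain ⟨J, hJ, hIJ⟩ := hI.subset_isBasis'_of_subset hIX
  rw [rnk_eq_ncard_of_isBasis' hJ]
  exact ncard_le_ncard hIJ hJ.indep.finite

end Rank

lemma isColoop_iff (M : Matroid α) (e : α) : IsColoop M e ↔ M.IsColoop e :=
  isColoop_iff_forall_mem_isBase.symm

lemma cyclicFlat_closure_of_isCircuit {M : Matroid α} {C : Set α} (hC : M.IsCircuit C) :
    CyclicFlat M (M.closure C) := by
  refine ⟨M.isFlat_closure C, fun e he hcoloop => ?_⟩
  obtain ⟨C', hC'C, hC', heC'⟩ : ∃ C' ⊆ M.closure C, M.IsCircuit C' ∧ e ∈ C' := by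
    by_cases heC : e ∈ C
    · exact ⟨C, M.subset_closure C hC.subset_ground, hC, heC⟩
    · obtain ⟨C', hC'sub, hC', heC'⟩ := exists_isCircuit_of_mem_closure he heC
      exact ⟨C', hC'sub.trans (insert_subset he (M.subset_closure C hC.subset_ground)),
        hC', heC'⟩
  exact (hC'.isCircuit_restrict_of_subset hC'C).not_isColoop_of_mem heC'
    ((isColoop_iff _ e).1 hcoloop)

lemma rnk_closure_lt_ncard_of_isCircuit {M : Matroid α} [M.RankFinite] {C : Set α}
    (hC : M.IsCircuit C) : rnk M (M.closure C) < C.ncard := by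
  obtain ⟨f, hf⟩ := hC.nonempty
  have hbasis : M.IsBasis (C \ {f}) (M.closure C) := by
    rw [← hC.closure_sdiff_singleton_eq f]
    exact (hC.sdiff_singleton_indep hf).isBasis_closure
  rw [rnk_eq_ncard_of_isBasis' hbasis.isBasis']
  exact ncard_sdiff_singleton_lt_of_mem hf hC.finite

lemma indep_iff_forall_cyclicFlat (M : Matroid α) [M.Finite] {I : Set α} (hI : I ⊆ M.E) :
    M.Indep I ↔ ∀ F, CyclicFlat M F → (I ∩ F).ncard ≤ rnk M F := by
  refine ⟨fun hI F _ => ncard_le_rnk_of_indep (hI.inter_right F) inter_subset_right,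
    fun h => ?_⟩
  by_contra hdep
  obtain ⟨C, hCI, hC⟩ := (M.not_indep_iff hI).1 hdep |>.exists_isCircuit_subset
  have hCF : C ⊆ I ∩ M.closure C := subset_inter hCI (M.subset_closure C hC.subset_ground)
  have hle := ncard_le_ncard hCF ((M.ground_finite.subset hI).inter_of_left _)
  exact (rnk_closure_lt_ncard_of_isCircuit hC).not_ge
    (hle.trans (h _ (cyclicFlat_closure_of_isCircuit hC)))

lemma bijOn_and_indep_iff_of_cyclicFlat_image {M : Matroid α} {N : Matroid β} [M.Finite]
    [N.Finite] (e : α ≃ β) (hE : e '' M.E = N.E)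
    (hZ : ∀ F, CyclicFlat N (e '' F) ↔ CyclicFlat M F)
    (hr : ∀ F, CyclicFlat M F → rnk N (e '' F) = rnk M F) :
    BijOn e M.E N.E ∧ ∀ I ⊆ M.E, (M.Indep I ↔ N.Indep (e '' I)) := by
  refine ⟨hE ▸ e.injective.injOn.bijOn_image, fun I hI => ?_⟩
  have hcard : ∀ F, (e '' I ∩ e '' F).ncard = (I ∩ F).ncard := fun F => by
    rw [← image_inter e.injective, ncard_image_of_injective _ e.injective]
  rw [indep_iff_forall_cyclicFlat M hI, indep_iff_forall_cyclicFlat N (hE ▸ image_mono hI)]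
  refine ⟨fun h G hG => ?_, fun h F hF => ?_⟩
  · rw [← e.image_symm_image G] at hG ⊢
    rw [hcard, hr _ ((hZ _).1 hG)]
    exact h _ ((hZ _).1 hG)
  · rw [← hcard, ← hr F hF]
    exact h _ ((hZ F).2 hF)

section Swap

variable [DecidableEq α] {x y : α} {s : Set α}

lemma image_swap_eq_self (h : x ∈ s ↔ y ∈ s) : Equiv.swap x y '' s = s := by
  ext a
  rw [mem_image_equiv, Equiv.symm_swap]
  rcases eq_or_ne a x with rfl | hax
  · rw [Equiv.swap_apply_left]; exact h.symm
  rcases eq_or_ne a y with rfl | hay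
  · rw [Equiv.swap_apply_right]; exact h
  · rw [Equiv.swap_apply_of_ne_of_ne hax hay]

lemma image_swap_eq_of_mem_of_notMem (hx : x ∈ s) (hy : y ∉ s) :
    Equiv.swap x y '' s = (s \ {x}) ∪ {y} := by
  rw [Equiv.image_swap_of_mem_of_notMem hx hy,
    ← insert_sdiff_singleton_comm (ne_of_mem_of_not_mem hx hy).symm, union_singleton]

end Swap

structure IsCyclicFlatReplacement (M N : Matroid α) (e f : α) : Prop where
  cyclicFlat_iff : ∀ F, CyclicFlat N F ↔ (CyclicFlat M F ∧ ¬ (e ∈ F ∧ f ∉ F)) ∨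
    ∃ Y, CyclicFlat M Y ∧ e ∈ Y ∧ f ∉ Y ∧ F = (Y \ {e}) ∪ {f}
  rnk_eq : ∀ F, CyclicFlat M F → ¬ (e ∈ F ∧ f ∉ F) → rnk N F = rnk M F
  rnk_replace_eq :
    ∀ Y, CyclicFlat M Y → e ∈ Y → f ∉ Y → rnk N ((Y \ {e}) ∪ {f}) = rnk M Y

namespace IsCyclicFlatReplacement

variable [DecidableEq α] {M N N' : Matroid α} {e f : α}

lemma cyclicFlat_image_swap (h : IsCyclicFlatReplacement M N e f)
    (h' : IsCyclicFlatReplacement M N' f e) {F : Set α} (hF : CyclicFlat N F) :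
    CyclicFlat N' (Equiv.swap f e '' F) ∧ rnk N' (Equiv.swap f e '' F) = rnk N F := by
  rcases (h.cyclicFlat_iff F).1 hF with ⟨hFM, hkept⟩ | ⟨Y, hY, heY, hfY, rfl⟩
  · rw [h.rnk_eq F hFM hkept]
    by_cases hmoved : f ∈ F ∧ e ∉ F
    · rw [image_swap_eq_of_mem_of_notMem hmoved.1 hmoved.2]
      exact ⟨(h'.cyclicFlat_iff _).2 (.inr ⟨F, hFM, hmoved.1, hmoved.2, rfl⟩),
        h'.rnk_replace_eq F hFM hmoved.1 hmoved.2⟩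
    · rw [image_swap_eq_self (by tauto)]
      exact ⟨(h'.cyclicFlat_iff F).2 (.inl ⟨hFM, hmoved⟩), h'.rnk_eq F hFM hmoved⟩
  · have hkept : ¬ (f ∈ Y ∧ e ∉ Y) := fun hfe => hfY hfe.1
    have hback : Equiv.swap f e '' ((Y \ {e}) ∪ {f}) = Y := by
      rw [← image_swap_eq_of_mem_of_notMem heY hfY, Equiv.swap_comm, image_image]
      simp only [Equiv.swap_apply_self, image_id']
    rw [hback]
    exact ⟨(h'.cyclicFlat_iff Y).2 (.inl ⟨hY, hkept⟩),
      (h'.rnk_eq Y hY hkept).trans (h.rnk_replace_eq Y hY heY hfY).symm⟩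

lemma cyclicFlat_image_swap_iff (h : IsCyclicFlatReplacement M N e f)
    (h' : IsCyclicFlatReplacement M N' f e) {F : Set α} :
    CyclicFlat N' (Equiv.swap f e '' F) ↔ CyclicFlat N F := by
  refine ⟨fun hF => ?_, fun hF => (h.cyclicFlat_image_swap h' hF).1⟩
  simpa only [Equiv.swap_comm e f, image_image, Equiv.swap_apply_self, image_id']
    using (h'.cyclicFlat_image_swap h hF).1

end IsCyclicFlatReplacement

theorem statement1_general [DecidableEq α] (M : Matroid α) [M.Finite] (x y : α)
    (hx : x ∈ M.E) (hy : y ∈ M.E)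
    (M' : Matroid α) (hM'E : M'.E = M.E)
    (hM'Z : ∀ F : Set α, CyclicFlat M' F ↔
      ((CyclicFlat M F ∧ ¬ (y ∈ F ∧ x ∉ F)) ∨
       (∃ Y, CyclicFlat M Y ∧ y ∈ Y ∧ x ∉ Y ∧ F = (Y \ {y}) ∪ {x})))
    (hM'r1 : ∀ F : Set α, CyclicFlat M F → ¬ (y ∈ F ∧ x ∉ F) → rnk M' F = rnk M F)
    (hM'r2 : ∀ Y : Set α, CyclicFlat M Y → y ∈ Y → x ∉ Y →
      rnk M' ((Y \ {y}) ∪ {x}) = rnk M Y)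
    (M'' : Matroid α) (hM''E : M''.E = M.E)
    (hM''Z : ∀ F : Set α, CyclicFlat M'' F ↔
      ((CyclicFlat M F ∧ ¬ (x ∈ F ∧ y ∉ F)) ∨
       (∃ X, CyclicFlat M X ∧ x ∈ X ∧ y ∉ X ∧ F = (X \ {x}) ∪ {y})))
    (hM''r1 : ∀ F : Set α, CyclicFlat M F → ¬ (x ∈ F ∧ y ∉ F) → rnk M'' F = rnk M F)
    (hM''r2 : ∀ X : Set α, CyclicFlat M X → x ∈ X → y ∉ X →
      rnk M'' ((X \ {x}) ∪ {y}) = rnk M X) :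
    Set.BijOn (Equiv.swap x y) M'.E M''.E ∧
    ∀ I ⊆ M'.E, (M'.Indep I ↔ M''.Indep ((Equiv.swap x y) '' I)) := by
  have hM' : IsCyclicFlatReplacement M M' y x := ⟨hM'Z, hM'r1, hM'r2⟩
  have hM'' : IsCyclicFlatReplacement M M'' x y := ⟨hM''Z, hM''r1, hM''r2⟩
  have : M'.Finite := ⟨hM'E ▸ M.ground_finite⟩
  have : M''.Finite := ⟨hM''E ▸ M.ground_finite⟩
  refine bijOn_and_indep_iff_of_cyclicFlat_image (Equiv.swap x y) ?_
    (fun _ => hM'.cyclicFlat_image_swap_iff hM'')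
    (fun _ hF => (hM'.cyclicFlat_image_swap hM'' hF).2)
  rw [hM'E, hM''E, image_swap_eq_self (iff_of_true hx hy)]

theorem statement1 [DecidableEq α] (M : Matroid α) [M.Finite] (x y : α)
    (hx : x ∈ M.E) (hy : y ∈ M.E)
    (hZx : ∃ F, CyclicFlat M F ∧ x ∈ F ∧ y ∉ F)
    (hZy : ∃ F, CyclicFlat M F ∧ y ∈ F ∧ x ∉ F)
    (hnm : ∀ X Y : Set α, CyclicFlat M X → x ∈ X → y ∉ X →
      CyclicFlat M Y → y ∈ Y → x ∉ Y → ¬ ModularPair M X Y)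
    (M' : Matroid α) (hM'E : M'.E = M.E)
    (hM'Z : ∀ F : Set α, CyclicFlat M' F ↔
      ((CyclicFlat M F ∧ ¬ (y ∈ F ∧ x ∉ F)) ∨
       (∃ Y, CyclicFlat M Y ∧ y ∈ Y ∧ x ∉ Y ∧ F = (Y \ {y}) ∪ {x})))
    (hM'r1 : ∀ F : Set α, CyclicFlat M F → ¬ (y ∈ F ∧ x ∉ F) → rnk M' F = rnk M F)
    (hM'r2 : ∀ Y : Set α, CyclicFlat M Y → y ∈ Y → x ∉ Y →
      rnk M' ((Y \ {y}) ∪ {x}) = rnk M Y)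
    (M'' : Matroid α) (hM''E : M''.E = M.E)
    (hM''Z : ∀ F : Set α, CyclicFlat M'' F ↔
      ((CyclicFlat M F ∧ ¬ (x ∈ F ∧ y ∉ F)) ∨
       (∃ X, CyclicFlat M X ∧ x ∈ X ∧ y ∉ X ∧ F = (X \ {x}) ∪ {y})))
    (hM''r1 : ∀ F : Set α, CyclicFlat M F → ¬ (x ∈ F ∧ y ∉ F) → rnk M'' F = rnk M F)
    (hM''r2 : ∀ X : Set α, CyclicFlat M X → x ∈ X → y ∉ X →
      rnk M'' ((X \ {x}) ∪ {y}) = rnk M X) :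
    Set.BijOn (Equiv.swap x y) M'.E M''.E ∧
    ∀ I ⊆ M'.E, (M'.Indep I ↔ M''.Indep ((Equiv.swap x y) '' I)) :=
  statement1_general M x y hx hy M' hM'E hM'Z hM'r1 hM'r2 M'' hM''E hM''Z hM''r1 hM''r2

end Paper
end

section
/- Let M be a lattice path matroid on [n] with path presentation (N_1, N_2, ..., N_r), and let X = [a+1, a+k] be an interval in [n] with k ≥ 1. If the indices i with N_i ∩ X ≠ ∅ are exactly j+1, j+2, ..., j+t, then r(X) = min(t, k), where r is the rank function of M. -/
/-!
An independent subset of `X = [a+1, a+k]` is matched injectively into the intervals meeting `X`,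
so `r(X) ≤ min(t, k)`. Conversely, among the intervals `N_{j+1}, …, N_{j+t}` the first
`m = min(t, k)` have distinct representatives in `X`, chosen greedily as
`max(l_i, a + (i - j))`: this stays below `u_i` because the `u_i` strictly increase from
`u_{j+1} ≥ a + 1`.
-/

open Set Matroid

namespace Paper

variable {α : Type*} {β : Type*}

lemma rnk_eq_of_indep {M : Matroid α} {X I : Set α} {m : ℕ} (hI : M.Indep I) (hIX : I ⊆ X)
    (hcard : I.ncard = m) (hle : ∀ J, M.Indep J → J ⊆ X → J.ncard ≤ m) : rnk M X = m := by
  have hmem : m ∈ {n | ∃ I, M.Indep I ∧ I ⊆ X ∧ I.ncard = n} := ⟨I, hI, hIX, hcard⟩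
  have hbdd : ∀ n ∈ {n | ∃ I, M.Indep I ∧ I ⊆ X ∧ I.ncard = n}, n ≤ m := by
    rintro _ ⟨J, hJ, hJX, rfl⟩
    exact hle J hJ hJX
  exact le_antisymm (csSup_le ⟨m, hmem⟩ hbdd) (le_csSup ⟨m, hbdd⟩ hmem)

namespace IsPresentation

variable {M : Matroid α} {r : ℕ} {A : ℕ → Set α}

lemma indep_image (hP : IsPresentation M r A) {S : Set ℕ} {x : ℕ → α} (hS : S ⊆ Icc 1 r)
    (hxA : ∀ i ∈ S, x i ∈ A i) : M.Indep (x '' S) := by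
  rw [hP.2]
  refine ⟨image_subset_iff.2 fun i hi ↦ hP.1 i (hS hi) (hxA i hi), Function.invFunOn x S,
    Function.invFunOn_injOn_image x S, ?_⟩
  rintro _ ⟨i, hi, rfl⟩
  have hex : ∃ i' ∈ S, x i' = x i := ⟨i, hi, rfl⟩
  refine ⟨hS (Function.invFunOn_mem hex), ?_⟩
  simpa only [Function.invFunOn_eq hex] using hxA _ (Function.invFunOn_mem hex)

lemma ncard_le_of_indep (hP : IsPresentation M r A) {I X : Set α} (hI : M.Indep I)
    (hIX : I ⊆ X) : I.ncard ≤ {i ∈ Icc 1 r | (A i ∩ X).Nonempty}.ncard := by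
  obtain ⟨-, φ, hφ, hφA⟩ := (hP.2 I).1 hI
  rw [← hφ.ncard_image]
  refine ncard_le_ncard ?_ ((finite_Icc 1 r).subset fun _ hi ↦ hi.1)
  rintro _ ⟨x, hx, rfl⟩
  exact ⟨(hφA x hx).1, x, (hφA x hx).2, hIX hx⟩

end IsPresentation

lemma _root_.StrictMonoOn.add_le_apply_add {u : ℕ → ℕ} {b c : ℕ} (hu : StrictMonoOn u (Icc b c))
    {p : ℕ} (hp : b + p ≤ c) : u b + p ≤ u (b + p) := by
  induction p with
  | zero => rfl
  | succ p ih =>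
    have hlt : u (b + p) < u (b + (p + 1)) :=
      hu ⟨by omega, by omega⟩ ⟨by omega, hp⟩ (by omega)
    have := ih (by omega)
    omega

lemma exists_injOn_mem_Icc_inter {l u : ℕ → ℕ} {a k j m : ℕ}
    (hl : StrictMonoOn l (Icc (j + 1) (j + m))) (hu : StrictMonoOn u (Icc (j + 1) (j + m)))
    (hmeet : ∀ i ∈ Icc (j + 1) (j + m), (Icc (l i) (u i) ∩ Icc (a + 1) (a + k)).Nonempty)
    (hmk : m ≤ k) :
    ∃ x : ℕ → ℕ, InjOn x (Icc (j + 1) (j + m)) ∧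
      ∀ i ∈ Icc (j + 1) (j + m), x i ∈ Icc (l i) (u i) ∩ Icc (a + 1) (a + k) := by
  refine ⟨fun i ↦ max (l i) (a + (i - j)), StrictMonoOn.injOn fun i hi i' hi' hlt ↦
    max_lt_max (hl hi hi' hlt) (by have := hi.1; omega), fun i hi ↦ ?_⟩
  obtain ⟨y, ⟨hly, hyu⟩, -, hyk⟩ := hmeet i hi
  obtain ⟨hji, him⟩ := hi
  obtain ⟨z, ⟨-, hzu⟩, haz, -⟩ := hmeet (j + 1) ⟨le_rfl, by omega⟩
  have hclimb := hu.add_le_apply_add (p := i - (j + 1)) (by omega)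
  rw [show j + 1 + (i - (j + 1)) = i by omega] at hclimb
  simp only [mem_inter_iff, mem_Icc, le_max_iff, max_le_iff]
  omega

theorem statement5_general (n r : ℕ) (l u : ℕ → ℕ) (M : Matroid ℕ) (h : IsLPM n r l u M)
    (a k j t : ℕ)
    (ht : {i ∈ Set.Icc 1 r | (Set.Icc (l i) (u i) ∩ Set.Icc (a + 1) (a + k)).Nonempty}
      = Set.Icc (j + 1) (j + t)) :
    rnk M (Set.Icc (a + 1) (a + k)) = min t k := by
  obtain ⟨-, -, hl, hu, -, -, hP⟩ := h
  have hidx : Icc (j + 1) (j + min t k) ⊆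
      {i ∈ Icc 1 r | (Icc (l i) (u i) ∩ Icc (a + 1) (a + k)).Nonempty} :=
    ht ▸ Icc_subset_Icc_right (by omega)
  have hsub : Icc (j + 1) (j + min t k) ⊆ Icc 1 r := fun i hi ↦ (hidx hi).1
  obtain ⟨x, hx, hxX⟩ := exists_injOn_mem_Icc_inter (hl.mono hsub) (hu.mono hsub)
    (fun i hi ↦ (hidx hi).2) (min_le_right t k)
  refine rnk_eq_of_indep (hP.indep_image hsub fun i hi ↦ (hxX i hi).1)
    (image_subset_iff.2 fun i hi ↦ (hxX i hi).2) (by rw [hx.ncard_image]; simp)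
    fun J hJ hJX ↦ le_min ?_ ?_
  · have hJt := hP.ncard_le_of_indep hJ hJX
    rw [ht, ncard_Icc_nat] at hJt
    omega
  · simpa using ncard_le_ncard hJX (finite_Icc _ _)

theorem statement5 (n r : ℕ) (l u : ℕ → ℕ) (M : Matroid ℕ) (h : IsLPM n r l u M)
    (a k j t : ℕ) (hk : 1 ≤ k) (hXn : a + k ≤ n)
    (ht : {i ∈ Set.Icc 1 r | (Set.Icc (l i) (u i) ∩ Set.Icc (a + 1) (a + k)).Nonempty}
      = Set.Icc (j + 1) (j + t)) :
    rnk M (Set.Icc (a + 1) (a + k)) = min t k :=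
  statement5_general n r l u M h a k j t ht

end Paper
end

section
/- Let M be a connected lattice path matroid on [n] with path presentation (N_1, N_2, ..., N_r). Let A = [a] be an initial connected flat of M and let B = [b, n] be a final connected flat of M. Then (A, B) is a modular pair if and only if the number of indices i ∈ [r] for which both A ∩ N_i and B ∩ N_i are nonempty is at most |A ∩ B|. -/
open Set Matroid

namespace Paper

variable {α : Type*} {β : Type*}

/-!
In `M[P,Q]` the rank of `[1, a]` is the number of intervals `N i` with `l i ≤ a` (represent
each by its left end), the rank of `[b, n]` is the number of those with `b ≤ u i` (right ends),
and the rank of `[1, a] ∪ [b, n]` is the size of the union of these two index sets `T` and `S`.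
The rank of an interval `[p, q]` is the minimum of `q + 1 - p` and the number of `N i` meeting
it, witnessed by a staircase of representatives. Since `A ∩ B` is an interval met exactly by
the `N i` with `i ∈ T ∩ S`, modularity reads `|T| + |S| = |T ∪ S| + min |T ∩ S| |A ∩ B|`,
i.e. `|T ∩ S| ≤ |A ∩ B|`.
-/

lemma ncard_Icc_nat (p q : ℕ) : (Icc p q).ncard = q + 1 - p := by
  rw [← Finset.coe_Icc, ncard_coe_finset, Nat.card_Icc]

lemma rnk_le_ncard (M : Matroid α) {X : Set α} (hX : X.Finite) : rnk M X ≤ X.ncard :=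
  csSup_le ⟨0, ∅, M.empty_indep, empty_subset X, ncard_empty α⟩ <| by
    rintro _ ⟨I, -, hIX, rfl⟩
    exact ncard_le_ncard hIX hX

section Transversal

variable {M : Matroid α} {r : ℕ} {N : ℕ → Set α}

namespace IsPresentation

lemma bddAbove_ncard_indep (hM : IsPresentation M r N) (X : Set α) :
    BddAbove {k | ∃ I, M.Indep I ∧ I ⊆ X ∧ I.ncard = k} := by
  refine ⟨r, ?_⟩
  rintro _ ⟨I, hI, -, rfl⟩
  obtain ⟨-, φ, hφ, hφN⟩ := (hM.2 I).1 hI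
  calc I.ncard = (φ '' I).ncard := hφ.ncard_image.symm
    _ ≤ (Icc 1 r).ncard := ncard_le_ncard (image_subset_iff.2 fun x hx => (hφN x hx).1)
    _ = r := by simp

lemma rnk_le_ncard_of_cover (hM : IsPresentation M r N) {X : Set α} {K : Set ℕ}
    (hK : K.Finite) (hcov : ∀ i ∈ Icc 1 r, (X ∩ N i).Nonempty → i ∈ K) :
    rnk M X ≤ K.ncard :=
  csSup_le ⟨0, ∅, M.empty_indep, empty_subset X, ncard_empty α⟩ <| by
    rintro _ ⟨I, hI, hIX, rfl⟩
    obtain ⟨-, φ, hφ, hφN⟩ := (hM.2 I).1 hI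
    rw [← hφ.ncard_image]
    refine ncard_le_ncard ?_ hK
    rintro _ ⟨x, hx, rfl⟩
    exact hcov _ (hφN x hx).1 ⟨x, hIX hx, (hφN x hx).2⟩

/-- A system of distinct representatives in `X` of the sets `N i`, `i ∈ K`, is independent. -/
lemma ncard_le_rnk_of_injOn (hM : IsPresentation M r N) {X : Set α} {K : Set ℕ}
    (hK : K ⊆ Icc 1 r) {g : ℕ → α} (hg : InjOn g K) (hgN : ∀ i ∈ K, g i ∈ X ∩ N i) :
    K.ncard ≤ rnk M X := by
  have hind : M.Indep (g '' K) := by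
    refine (hM.2 _).2 ⟨?_, Function.invFunOn g K, Function.invFunOn_injOn_image g K, ?_⟩
    · rintro _ ⟨i, hi, rfl⟩
      exact hM.1 i (hK hi) (hgN i hi).2
    · rintro _ ⟨i, hi, rfl⟩
      rw [hg.leftInvOn_invFunOn hi]
      exact ⟨hK hi, (hgN i hi).2⟩
  refine le_csSup (hM.bddAbove_ncard_indep X) ⟨g '' K, hind, ?_, hg.ncard_image⟩
  rintro _ ⟨i, hi, rfl⟩
  exact (hgN i hi).1

lemma rnk_eq_ncard (hM : IsPresentation M r N) {X : Set α} {K : Set ℕ}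
    (hK : K ⊆ Icc 1 r) (hcov : ∀ i ∈ Icc 1 r, (X ∩ N i).Nonempty → i ∈ K)
    {g : ℕ → α} (hg : InjOn g K) (hgN : ∀ i ∈ K, g i ∈ X ∩ N i) :
    rnk M X = K.ncard :=
  (hM.rnk_le_ncard_of_cover ((finite_Icc 1 r).subset hK) hcov).antisymm
    (hM.ncard_le_rnk_of_injOn hK hg hgN)

end IsPresentation

end Transversal

lemma StrictMonoOn.add_sub_le {f : ℕ → ℕ} {s : Set ℕ} (hs : s.OrdConnected)
    (hf : StrictMonoOn f s) {i k : ℕ} (hi : i ∈ s) (hk : k ∈ s) (hik : i ≤ k) :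
    f i + (k - i) ≤ f k := by
  induction k, hik using Nat.le_induction with
  | base => simp
  | succ k hik ih =>
    have hks : k ∈ s := hs.out hi hk ⟨hik, k.le_succ⟩
    have := hf hks hk k.lt_succ_self
    have := ih hks
    omega

namespace IsLPM

variable {n r : ℕ} {l u : ℕ → ℕ} {M : Matroid ℕ}

lemma strictMonoOn_l (h : IsLPM n r l u M) : StrictMonoOn l (Icc 1 r) := h.2.2.1

lemma strictMonoOn_u (h : IsLPM n r l u M) : StrictMonoOn u (Icc 1 r) := h.2.2.2.1

lemma isPresentation (h : IsLPM n r l u M) : IsPresentation M r (fun i => Icc (l i) (u i)) :=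
  h.2.2.2.2.2.2

lemma bounds (h : IsLPM n r l u M) {i : ℕ} (hi : i ∈ Icc 1 r) :
    1 ≤ l i ∧ l i ≤ u i ∧ u i ≤ n := by
  obtain ⟨⟨hl, -⟩, ⟨-, hu⟩, hlu⟩ := h.2.2.2.2.1 i hi
  exact ⟨hl, hlu, hu⟩

lemma rnk_Icc_one (h : IsLPM n r l u M) (a : ℕ) :
    rnk M (Icc 1 a) = {i ∈ Icc 1 r | l i ≤ a}.ncard := by
  refine h.isPresentation.rnk_eq_ncard (fun i hi => hi.1) ?_
    (h.strictMonoOn_l.injOn.mono fun i hi => hi.1) ?_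
  · rintro i hi ⟨x, hxa, hxN⟩
    exact ⟨hi, hxN.1.trans hxa.2⟩
  · rintro i ⟨hi, hla⟩
    have := h.bounds hi
    exact ⟨⟨this.1, hla⟩, le_rfl, this.2.1⟩

lemma rnk_Icc_last (h : IsLPM n r l u M) (b : ℕ) :
    rnk M (Icc b n) = {i ∈ Icc 1 r | b ≤ u i}.ncard := by
  refine h.isPresentation.rnk_eq_ncard (fun i hi => hi.1) ?_
    (h.strictMonoOn_u.injOn.mono fun i hi => hi.1) ?_
  · rintro i hi ⟨x, hxb, hxN⟩
    exact ⟨hi, hxb.1.trans hxN.2⟩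
  · rintro i ⟨hi, hbu⟩
    have := h.bounds hi
    exact ⟨⟨hbu, this.2.2⟩, this.2.1, le_rfl⟩

/-- Represent `N i` by its first element if it meets `[1, a]` and by its last one otherwise;
the first kind all lie in `[1, a]`, the second kind beyond `a`. -/
lemma rnk_Icc_one_union_Icc_last (h : IsLPM n r l u M) (a b : ℕ) :
    rnk M (Icc 1 a ∪ Icc b n) =
      ({i ∈ Icc 1 r | l i ≤ a} ∪ {i ∈ Icc 1 r | b ≤ u i}).ncard := by
  refine h.isPresentation.rnk_eq_ncard (g := fun i => if l i ≤ a then l i else u i)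
    (union_subset (fun i hi => hi.1) (fun i hi => hi.1)) ?_ ?_ ?_
  · rintro i hi ⟨x, hx, hxN⟩
    rcases hx with hx | hx
    · exact Or.inl ⟨hi, hxN.1.trans hx.2⟩
    · exact Or.inr ⟨hi, hx.1.trans hxN.2⟩
  · intro x hx y hy hxy
    have hxr : x ∈ Icc 1 r := hx.elim And.left And.left
    have hyr : y ∈ Icc 1 r := hy.elim And.left And.left
    have := h.bounds hxr
    have := h.bounds hyr
    simp only at hxy
    split_ifs at hxy with hlx hly hly
    · exact h.strictMonoOn_l.injOn hxr hyr hxy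
    · omega
    · omega
    · exact h.strictMonoOn_u.injOn hxr hyr hxy
  · intro i hi
    have hir : i ∈ Icc 1 r := hi.elim And.left And.left
    have := h.bounds hir
    split_ifs with hla
    · exact ⟨Or.inl ⟨this.1, hla⟩, le_rfl, this.2.1⟩
    · have hbu : b ≤ u i := hi.elim (fun hi => absurd hi.2 hla) And.right
      exact ⟨Or.inr ⟨hbu, this.2.2⟩, this.2.1, le_rfl⟩

/-- Represent `N i` by `max (l i) (p + (i - j))`: these values strictly increase, and stay
below `u i` because `u` increases by at least one per index. -/
lemma le_rnk_Icc (h : IsLPM n r l u M) {p q j k : ℕ} (hj : 1 ≤ j) (hk : k ≤ r)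
    (hlk : l k ≤ q) (hpu : p ≤ u j) (hlen : k + 1 - j ≤ q + 1 - p) :
    k + 1 - j ≤ rnk M (Icc p q) := by
  have hsub : Icc j k ⊆ Icc 1 r := Icc_subset_Icc hj hk
  have hmono : StrictMonoOn (fun i => max (l i) (p + (i - j))) (Icc j k) := by
    intro x hx y hy hxy
    exact max_lt_max (h.strictMonoOn_l (hsub hx) (hsub hy) hxy) (by have := hx.1; omega)
  rw [← ncard_Icc_nat]
  refine h.isPresentation.ncard_le_rnk_of_injOn hsub hmono.injOn fun i hi => ?_
  obtain ⟨hji, hik⟩ := hi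
  have hb := h.bounds (hsub ⟨hji, hik⟩)
  have hli : l i ≤ l k :=
    h.strictMonoOn_l.monotoneOn (hsub ⟨hji, hik⟩) (hsub ⟨hji.trans hik, le_rfl⟩) hik
  have hui : u j + (i - j) ≤ u i := StrictMonoOn.add_sub_le ordConnected_Icc
    h.strictMonoOn_u (hsub ⟨le_rfl, hji.trans hik⟩) (hsub ⟨hji, hik⟩) hji
  exact ⟨⟨by omega, by omega⟩, by omega, by omega⟩

lemma rnk_Icc (h : IsLPM n r l u M) (p q : ℕ) :
    rnk M (Icc p q) = min {i ∈ Icc 1 r | l i ≤ q ∧ p ≤ u i}.ncard (Icc p q).ncard := by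
  set K := {i ∈ Icc 1 r | l i ≤ q ∧ p ≤ u i}
  have hKfin : K.Finite := (finite_Icc 1 r).subset fun i hi => hi.1
  refine le_antisymm (le_min ?_ (rnk_le_ncard M (finite_Icc p q))) ?_
  · refine h.isPresentation.rnk_le_ncard_of_cover hKfin ?_
    rintro i hi ⟨x, hx, hxN⟩
    exact ⟨hi, hxN.1.trans hx.2, hx.1.trans hxN.2⟩
  rcases K.eq_empty_or_nonempty with hK | hK
  · simp [hK]
  -- `K ⊆ [min K, max K]`, so the staircase on `m` indices from `min K` stops inside `K`.
  set j := sInf K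
  set k := sSup K
  have hjK : j ∈ K := Nat.sInf_mem hK
  have hkK : k ∈ K := Nat.sSup_mem hK hKfin.bddAbove
  have hKjk : K.ncard ≤ k + 1 - j := by
    rw [← ncard_Icc_nat]
    exact ncard_le_ncard (fun i hi => ⟨Nat.sInf_le hi, le_csSup hKfin.bddAbove hi⟩)
      (finite_Icc _ _)
  have hpq := ncard_Icc_nat p q
  set m := min K.ncard (Icc p q).ncard
  rcases Nat.eq_zero_or_pos m with hm | hm
  · simp [m, hm]
  have hlk : l (j + m - 1) ≤ l k := h.strictMonoOn_l.monotoneOn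
    ⟨by have := hjK.1.1; omega, by have := hkK.1.2; omega⟩ hkK.1 (by omega)
  have := h.le_rnk_Icc (j := j) (k := j + m - 1) hjK.1.1 (by have := hkK.1.2; omega)
    (hlk.trans hkK.2.1) hjK.2.2 (by omega)
  omega

end IsLPM

theorem statement6_general (n r : ℕ) (l u : ℕ → ℕ) (M : Matroid ℕ) (h : IsLPM n r l u M)
    (a b : ℕ) :
    ModularPair M (Set.Icc 1 a) (Set.Icc b n) ↔
      {i ∈ Set.Icc 1 r | (Set.Icc 1 a ∩ Set.Icc (l i) (u i)).Nonempty ∧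
          (Set.Icc b n ∩ Set.Icc (l i) (u i)).Nonempty}.ncard
        ≤ (Set.Icc 1 a ∩ Set.Icc b n).ncard := by
  have hmeet : {i ∈ Icc 1 r | (Icc 1 a ∩ Icc (l i) (u i)).Nonempty ∧
      (Icc b n ∩ Icc (l i) (u i)).Nonempty} = {i ∈ Icc 1 r | l i ≤ a ∧ b ≤ u i} := by
    refine sep_ext_iff.2 fun i hi => ?_
    have := h.bounds hi
    simp only [Icc_inter_Icc, nonempty_Icc]
    omega
  have hmeet_inter : {i ∈ Icc 1 r | l i ≤ a ⊓ n ∧ 1 ⊔ b ≤ u i} =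
      {i ∈ Icc 1 r | l i ≤ a ∧ b ≤ u i} := by
    refine sep_ext_iff.2 fun i hi => ?_
    have := h.bounds hi
    omega
  rw [ModularPair, hmeet, h.rnk_Icc_one, h.rnk_Icc_last, h.rnk_Icc_one_union_Icc_last,
    Icc_inter_Icc, h.rnk_Icc, hmeet_inter, sep_and]
  have := ncard_union_add_ncard_inter {i ∈ Icc 1 r | l i ≤ a} {i ∈ Icc 1 r | b ≤ u i}
    ((finite_Icc 1 r).sep _) ((finite_Icc 1 r).sep _)
  omega

theorem statement6 (n r : ℕ) (l u : ℕ → ℕ) (M : Matroid ℕ) (h : IsLPM n r l u M)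
    (hconn : MatConnected M) (a b : ℕ)
    (hA : InitialFlat r l a) (hB : FinalFlat r u b) :
    ModularPair M (Set.Icc 1 a) (Set.Icc b n) ↔
      {i ∈ Set.Icc 1 r | (Set.Icc 1 a ∩ Set.Icc (l i) (u i)).Nonempty ∧
          (Set.Icc b n ∩ Set.Icc (l i) (u i)).Nonempty}.ncard
        ≤ (Set.Icc 1 a ∩ Set.Icc b n).ncard :=
  statement6_general n r l u M h a b

end Paper
end

section
/- Let (Y_1, Y_2, ..., Y_r) be a presentation of a transversal matroid N such that for every e ∈ E(N) the support s(e) = {i ∈ [r] : e ∈ Y_i} is an interval in [r]. Then: (1) for every circuit C of N, the support s(C) = ∪_{e ∈ C} s(e) is an interval in [r]; and (2) for every flat F of N with |F| ≥ 2 such that N|F is connected, the support s(F) is an interval I in [r] and F = {e ∈ E(N) : s(e) ⊆ I}. -/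
open Set Matroid

namespace Paper

variable {α : Type*} {β : Type*}

/-!
If the support of a circuit `C` had a gap `z`, then `C` would split into the elements supported
below `z` and those supported above `z`. Both parts are proper subsets of `C`, hence independent,
and their supports are disjoint, so their matchings combine and `C` would be independent.

For a connected flat `F`, consider the König–Ore formula `r(F) = min_{A ⊆ F} (|F \ A| + |s(A)|)`
(Hall's theorem with defect). Every element `e` of `F` lies in a circuit inside `F`, so deleting
`e ∈ F \ A` keeps the rank and lowers `|F \ A|`; hence the minimum is attained at `A = F`, that is,
`r(F) = |s(F)|`. An element `a` with `s(a) ⊆ s(F)` then cannot raise the rank of `F`, so it lies in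
the closure of `F`, which is `F`.
-/

/-- Hall's marriage theorem with defect `d`. -/
theorem exists_injective_sum_of_card_le_card_biUnion_add {ι : Type*} [DecidableEq β]
    (t : ι → Finset β) (d : ℕ) (h : ∀ s : Finset ι, s.card ≤ (s.biUnion t).card + d) :
    ∃ f : ι → β ⊕ Fin d, f.Injective ∧ ∀ i b, f i = .inl b → b ∈ t i := by
  have hall : ∀ s : Finset ι,
      s.card ≤ (s.biUnion fun i => (t i).disjSum (Finset.univ : Finset (Fin d))).card := by
    intro s
    rcases s.eq_empty_or_nonempty with rfl | ⟨i₀, hi₀⟩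
    · simp
    have hunion : s.biUnion (fun i => (t i).disjSum Finset.univ) =
        (s.biUnion t).disjSum (Finset.univ : Finset (Fin d)) := by
      ext (b | k) <;> simp only [Finset.mem_biUnion, Finset.inl_mem_disjSum,
        Finset.inr_mem_disjSum, Finset.mem_univ, and_true]
      exact iff_true_intro ⟨i₀, hi₀⟩
    rw [hunion, Finset.card_disjSum, Finset.card_univ, Fintype.card_fin]
    exact h s
  obtain ⟨f, hf, hft⟩ := (Finset.all_card_le_biUnion_card_iff_exists_injective _).1 hall
  exact ⟨f, hf, fun i b hb => by simpa [hb] using hft i⟩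

/-- The support `s(X)` of the paper. -/
def supp (r : ℕ) (Y : ℕ → Set α) (X : Set α) : Set ℕ :=
  {i ∈ Icc 1 r | ∃ e ∈ X, e ∈ Y i}

section supp

variable {r : ℕ} {Y : ℕ → Set α} {X X' : Set α}

lemma supp_mono (h : X ⊆ X') : supp r Y X ⊆ supp r Y X' :=
  fun _ ⟨hi, e, he, heY⟩ => ⟨hi, e, h he, heY⟩

@[simp] lemma supp_empty : supp r Y ∅ = ∅ := by
  simp [supp]

lemma supp_finite : (supp r Y X).Finite :=
  (finite_Icc 1 r).subset (sep_subset _ _)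

end supp

lemma IsInterval.forall_lt_or_forall_gt {S : Set ℕ} {z : ℕ} (hS : IsInterval S) (hz : z ∉ S) :
    (∀ i ∈ S, i < z) ∨ ∀ i ∈ S, z < i := by
  by_contra! ⟨⟨y, hy, hzy⟩, x, hx, hxz⟩
  exact hz (hS x hx y hy z hxz hzy)

lemma isCircuit_iff_matroid_isCircuit {M : Matroid α} {C : Set α} :
    IsCircuit M C ↔ M.IsCircuit C := by
  rw [isCircuit_iff_dep_forall_sdiff_singleton_indep, dep_iff, and_comm (a := ¬ _)]
  exact and_assoc.symm

lemma MatConnected.exists_isCircuit {N : Matroid α} {F : Set α} (h : MatConnected (N ↾ F))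
    (hF : F ⊆ N.E) {e f : α} (he : e ∈ F) (hf : f ∈ F) (hef : e ≠ f) :
    ∃ C ⊆ F, N.IsCircuit C ∧ e ∈ C ∧ f ∈ C := by
  obtain ⟨C, hC, heC, hfC⟩ := h.2 he hf hef
  obtain ⟨hC, hCF⟩ := (restrict_isCircuit_iff hF).1 (isCircuit_iff_matroid_isCircuit.1 hC)
  exact ⟨C, hCF, hC, heC, hfC⟩

namespace IsPresentation

variable {N : Matroid α} {r : ℕ} {Y : ℕ → Set α} {F I I₁ I₂ C D : Set α}

lemma encard_inter_le (hpres : IsPresentation N r Y) (hI : N.Indep I) (A : Set α) :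
    (I ∩ A).encard ≤ (supp r Y A).encard := by
  obtain ⟨-, φ, hφ, hφY⟩ := (hpres.2 I).1 hI
  exact encard_le_encard_of_injOn (fun x hx => ⟨(hφY x hx.1).1, x, hx.2, (hφY x hx.1).2⟩)
    (hφ.mono inter_subset_left)

lemma eRk_le (hpres : IsPresentation N r Y) (X A : Set α) :
    N.eRk X ≤ (X \ A).encard + (supp r Y A).encard := by
  refine eRk_le_iff.2 fun I hIX hI => ?_
  rw [← encard_sdiff_add_encard_inter I A]
  exact add_le_add (encard_le_encard (sdiff_subset_sdiff_left hIX)) (hpres.encard_inter_le hI A)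

lemma indep_union_of_disjoint_supp (hpres : IsPresentation N r Y) (h₁ : N.Indep I₁)
    (h₂ : N.Indep I₂) (hdisj : Disjoint (supp r Y I₁) (supp r Y I₂)) : N.Indep (I₁ ∪ I₂) := by
  classical
  obtain ⟨hE₁, φ₁, hφ₁, hφY₁⟩ := (hpres.2 I₁).1 h₁
  obtain ⟨hE₂, φ₂, hφ₂, hφY₂⟩ := (hpres.2 I₂).1 h₂
  have hmem₁ : ∀ x ∈ I₁, φ₁ x ∈ supp r Y I₁ :=
    fun x hx => ⟨(hφY₁ x hx).1, x, hx, (hφY₁ x hx).2⟩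
  have hmem₂ : ∀ x ∈ I₂, φ₂ x ∈ supp r Y I₂ :=
    fun x hx => ⟨(hφY₂ x hx).1, x, hx, (hφY₂ x hx).2⟩
  refine (hpres.2 _).2 ⟨union_subset hE₁ hE₂, fun x => if x ∈ I₁ then φ₁ x else φ₂ x, ?_, ?_⟩
  · rintro x hx y hy hxy
    by_cases hx₁ : x ∈ I₁ <;> by_cases hy₁ : y ∈ I₁ <;>
      simp only [hx₁, hy₁, if_true, if_false] at hxy
    · exact hφ₁ hx₁ hy₁ hxy
    · exact (hdisj.notMem_of_mem_right (hmem₂ y (hy.resolve_left hy₁)) (hxy ▸ hmem₁ x hx₁)).elim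
    · exact (hdisj.notMem_of_mem_left (hmem₁ y hy₁) (hxy ▸ hmem₂ x (hx.resolve_left hx₁))).elim
    · exact hφ₂ (hx.resolve_left hx₁) (hy.resolve_left hy₁) hxy
  · intro x hx
    by_cases hx₁ : x ∈ I₁
    · simpa [hx₁] using hφY₁ x hx₁
    · simpa [hx₁] using hφY₂ x (hx.resolve_left hx₁)

lemma not_disjoint_supp_of_isCircuit (hpres : IsPresentation N r Y) (hC : N.IsCircuit C)
    (hDC : D ⊆ C) {x y : α} (hx : x ∈ D) (hy : y ∈ C \ D) :
    ¬ Disjoint (supp r Y D) (supp r Y (C \ D)) := fun hdisj => by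
  refine hC.not_indep ?_
  rw [← union_sdiff_cancel hDC]
  refine hpres.indep_union_of_disjoint_supp ((hC.sdiff_singleton_indep hy.1).subset ?_)
    ((hC.sdiff_singleton_indep (hDC hx)).subset ?_) hdisj
  · exact fun e he => ⟨hDC he, fun h => hy.2 ((mem_singleton_iff.1 h) ▸ he)⟩
  · exact fun e he => ⟨he.1, fun h => he.2 ((mem_singleton_iff.1 h) ▸ hx)⟩

lemma isInterval_supp_of_isCircuit (hpres : IsPresentation N r Y)
    (hsupp : ∀ e ∈ N.E, IsInterval {i ∈ Icc 1 r | e ∈ Y i}) (hC : N.IsCircuit C) :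
    IsInterval (supp r Y C) := by
  rintro x ⟨hx, ex, hexC, hexY⟩ y ⟨hy, ey, heyC, heyY⟩ z hxz hzy
  by_contra hz
  have hside : ∀ e ∈ C, (∀ i ∈ {i ∈ Icc 1 r | e ∈ Y i}, i < z) ∨
      ∀ i ∈ {i ∈ Icc 1 r | e ∈ Y i}, z < i := fun e he =>
    (hsupp e (hC.subset_ground he)).forall_lt_or_forall_gt fun h => hz ⟨h.1, e, he, h.2⟩
  set D := {e ∈ C | ∀ i ∈ {i ∈ Icc 1 r | e ∈ Y i}, i < z}
  have hlow : ∀ i ∈ supp r Y D, i < z := fun i ⟨hi, _, he, heY⟩ => he.2 i ⟨hi, heY⟩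
  have hhigh : ∀ i ∈ supp r Y (C \ D), z < i := fun i ⟨hi, e, ⟨heC, heD⟩, heY⟩ =>
    (hside e heC).resolve_left (fun h => heD ⟨heC, h⟩) i ⟨hi, heY⟩
  refine hpres.not_disjoint_supp_of_isCircuit hC (sep_subset _ _) (x := ex) (y := ey) ?_ ?_
    (disjoint_left.2 fun i h₁ h₂ => lt_asymm (hlow i h₁) (hhigh i h₂))
  · exact ⟨hexC, (hside ex hexC).resolve_right fun h => (h x ⟨hx, hexY⟩).not_ge hxz⟩
  · exact ⟨heyC, fun h => (h.2 y ⟨hy, heyY⟩).not_ge hzy⟩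

lemma isInterval_supp_of_matConnected (hpres : IsPresentation N r Y)
    (hsupp : ∀ e ∈ N.E, IsInterval {i ∈ Icc 1 r | e ∈ Y i}) (hF : F ⊆ N.E)
    (hconn : MatConnected (N ↾ F)) : IsInterval (supp r Y F) := by
  rintro x ⟨hx, ex, hexF, hexY⟩ y ⟨hy, ey, heyF, heyY⟩ z hxz hzy
  obtain rfl | hne := eq_or_ne ex ey
  · obtain ⟨hz, hzY⟩ := hsupp ex (hF hexF) x ⟨hx, hexY⟩ y ⟨hy, heyY⟩ z hxz hzy
    exact ⟨hz, ex, hexF, hzY⟩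
  obtain ⟨C, hCF, hC, hexC, heyC⟩ := hconn.exists_isCircuit hF hexF heyF hne
  exact supp_mono hCF <| hpres.isInterval_supp_of_isCircuit hsupp hC x ⟨hx, ex, hexC, hexY⟩
    y ⟨hy, ey, heyC, heyY⟩ z hxz hzy

lemma exists_indep_ncard_le_add (hpres : IsPresentation N r Y) (hF : F.Finite) (hFE : F ⊆ N.E)
    (d : ℕ) (hd : ∀ A ⊆ F, A.ncard ≤ (supp r Y A).ncard + d) :
    ∃ J ⊆ F, N.Indep J ∧ F.ncard ≤ J.ncard + d := by
  classical
  have : Finite F := hF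
  let t : F → Finset ℕ := fun e => {i ∈ Finset.Icc 1 r | (e : α) ∈ Y i}
  obtain ⟨f, hf, hft⟩ := exists_injective_sum_of_card_le_card_biUnion_add t d fun s => by
    have hs : supp r Y (Subtype.val '' (s : Set F)) = ↑(s.biUnion t) := by
      ext i
      simp [supp, t]
    have := hd _ (Subtype.coe_image_subset F s)
    rwa [hs, ncard_image_of_injective _ Subtype.val_injective, ncard_coe_finset,
      ncard_coe_finset] at this
  let S : Set F := {e | ∃ b, f e = .inl b}
  let φ : α → ℕ := fun x => if h : x ∈ F then ((f ⟨x, h⟩).getLeft?).getD 0 else 0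
  have hφ : ∀ e : F, ∀ b, f e = .inl b → φ e = b := fun e b hb => by simp [φ, hb]
  have hcompl : Sᶜ.ncard ≤ d := by
    calc Sᶜ.ncard ≤ (range (Sum.inr : Fin d → ℕ ⊕ Fin d)).ncard := by
          refine ncard_le_ncard_of_injOn f (fun e he => ?_) hf.injOn
          rcases hfe : f e with b | k
          · exact absurd ⟨b, hfe⟩ he
          · exact ⟨k, rfl⟩
      _ = d := by rw [ncard_range_of_injective Sum.inr_injective, Nat.card_eq_fintype_card,
          Fintype.card_fin]
  refine ⟨Subtype.val '' S, Subtype.coe_image_subset F S,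
    (hpres.2 _).2 ⟨(Subtype.coe_image_subset F S).trans hFE, φ, ?_, ?_⟩, ?_⟩
  · rintro _ ⟨a, ⟨b, hb⟩, rfl⟩ _ ⟨a', ⟨b', hb'⟩, rfl⟩ h
    rw [hφ a b hb, hφ a' b' hb'] at h
    exact congrArg Subtype.val (hf (hb.trans (h ▸ hb'.symm)))
  · rintro _ ⟨a, ⟨b, hb⟩, rfl⟩
    simpa [hφ a b hb, t] using hft a b hb
  · rw [ncard_image_of_injective _ Subtype.val_injective, ← Nat.card_coe_set_eq,
      ← ncard_add_ncard_compl S]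
    omega

/-- The `≥` half of the König–Ore formula `r(F) = min_{A ⊆ F} (|F \ A| + |s(A)|)`, attained
at a set `A` of maximal deficiency `|A| - |s(A)|`. -/
lemma exists_encard_add_le_eRk (hpres : IsPresentation N r Y) (hF : F.Finite)
    (hFE : F ⊆ N.E) :
    ∃ A ⊆ F, (F \ A).encard + (supp r Y A).encard ≤ N.eRk F := by
  obtain ⟨A, hAF, hAmax⟩ := exists_max_image {B | B ⊆ F}
    (fun B => (B.ncard : ℤ) - (supp r Y B).ncard) hF.finite_subsets ⟨∅, empty_subset F⟩
  have hsA : (supp r Y A).ncard ≤ A.ncard := by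
    have := hAmax ∅ (empty_subset F)
    simp only [ncard_empty, supp_empty, CharP.cast_eq_zero, sub_self] at this
    omega
  obtain ⟨J, hJF, hJ, hFJ⟩ := hpres.exists_indep_ncard_le_add hF hFE
    (A.ncard - (supp r Y A).ncard) fun B hB => by
      have := hAmax B hB
      omega
  refine ⟨A, hAF, ?_⟩
  have hAcard : A.ncard ≤ F.ncard := ncard_le_ncard hAF hF
  rw [← hF.sdiff.cast_ncard_eq, ← supp_finite.cast_ncard_eq, ncard_sdiff hAF (hF.subset hAF)]
  calc ((F.ncard - A.ncard : ℕ) : ℕ∞) + (supp r Y A).ncard ≤ J.ncard := by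
        norm_cast
        omega
    _ = J.encard := (hF.subset hJF).cast_ncard_eq
    _ ≤ N.eRk F := hJ.encard_le_eRk_of_subset hJF

lemma eRk_eq_encard_supp (hpres : IsPresentation N r Y) (hF : F.Finite) (hFE : F ⊆ N.E)
    (hcyc : ∀ e ∈ F, ∃ C ⊆ F, N.IsCircuit C ∧ e ∈ C) : N.eRk F = (supp r Y F).encard := by
  refine le_antisymm (by simpa using hpres.eRk_le F F) ?_
  obtain ⟨A, hAF, hA⟩ := hpres.exists_encard_add_le_eRk hF hFE
  obtain rfl | hAF := hAF.eq_or_ssubset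
  · simpa using hA
  obtain ⟨e, heF, heA⟩ := exists_of_ssubset hAF
  obtain ⟨C, hCF, hC, heC⟩ := hcyc e heF
  have hrk : N.eRk (F \ {e}) = N.eRk F := by
    rw [← eRk_closure_eq, closure_sdiff_singleton_eq_closure, eRk_closure_eq]
    exact N.closure_subset_closure (sdiff_subset_sdiff_left hCF)
      (hC.mem_closure_sdiff_singleton_of_mem heC)
  have hdiff : (F \ A).encard = ((F \ {e}) \ A).encard + 1 := by
    rw [sdiff_right_comm F {e} A, encard_sdiff_singleton_add_one (mem_sdiff_of_mem heF heA)]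
  have hfin : ((F \ {e}) \ A).encard + (supp r Y A).encard ≠ ⊤ :=
    WithTop.add_ne_top.2 ⟨(hF.sdiff.sdiff).encard_lt_top.ne, supp_finite.encard_lt_top.ne⟩
  have := hpres.eRk_le (F \ {e}) A
  rw [hrk] at this
  rw [hdiff, add_right_comm] at hA
  exact absurd ((ENat.add_one_le_iff hfin).1 (hA.trans this)) (lt_irrefl _)

lemma eq_setOf_supp_subset (hpres : IsPresentation N r Y) (hFlat : N.IsFlat F) (hF : F.Finite)
    (hrk : N.eRk F = (supp r Y F).encard) :
    F = {a ∈ N.E | {i ∈ Icc 1 r | a ∈ Y i} ⊆ supp r Y F} := by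
  ext a
  refine ⟨fun haF => ⟨hFlat.subset_ground haF, fun i hi => ⟨hi.1, a, haF, hi.2⟩⟩, ?_⟩
  rintro ⟨haE, ha⟩
  by_contra haF
  have hs : supp r Y (insert a F) = supp r Y F := by
    refine (supp_mono (subset_insert a F)).antisymm' fun i ⟨hi, e, he, heY⟩ => ?_
    obtain rfl | he := he
    exacts [ha ⟨hi, heY⟩, ⟨hi, e, he, heY⟩]
  have hins : N.eRk (insert a F) = N.eRk F + 1 :=
    eRk_insert_eq_add_one ⟨haE, by rwa [hFlat.closure]⟩
  have := hpres.eRk_le (insert a F) (insert a F)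
  rw [sdiff_self, encard_empty, zero_add, hs, ← hrk, hins] at this
  have hfin : N.eRk F ≠ ⊤ := ((N.eRk_le_encard F).trans_lt hF.encard_lt_top).ne
  exact absurd ((ENat.add_one_le_iff hfin).1 this) (lt_irrefl _)

end IsPresentation

theorem statement11_general (N : Matroid α) (r : ℕ) (Y : ℕ → Set α)
    (hpres : IsPresentation N r Y)
    (hsupp : ∀ e ∈ N.E, IsInterval {i ∈ Set.Icc 1 r | e ∈ Y i}) :
    (∀ C : Set α, IsCircuit N C →
      IsInterval {i ∈ Set.Icc 1 r | ∃ e ∈ C, e ∈ Y i}) ∧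
    (∀ F : Set α, N.IsFlat F → 2 ≤ F.ncard → MatConnected (N ↾ F) →
      IsInterval {i ∈ Set.Icc 1 r | ∃ e ∈ F, e ∈ Y i} ∧
      F = {a ∈ N.E |
        {i ∈ Set.Icc 1 r | a ∈ Y i} ⊆ {i ∈ Set.Icc 1 r | ∃ e ∈ F, e ∈ Y i}}) := by
  refine ⟨fun C hC =>
    hpres.isInterval_supp_of_isCircuit hsupp (isCircuit_iff_matroid_isCircuit.1 hC),
    fun F hFlat hcard hconn => ?_⟩
  have hFE := hFlat.subset_ground
  have hF : F.Finite := finite_of_ncard_pos (by omega)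
  refine ⟨hpres.isInterval_supp_of_matConnected hsupp hFE hconn,
    hpres.eq_setOf_supp_subset hFlat hF (hpres.eRk_eq_encard_supp hF hFE fun e he => ?_)⟩
  obtain ⟨f, hf, hfe⟩ := exists_ne_of_one_lt_ncard (s := F) (by omega) e
  obtain ⟨C, hCF, hC, heC, -⟩ := hconn.exists_isCircuit hFE he hf hfe.symm
  exact ⟨C, hCF, hC, heC⟩

theorem statement11 (N : Matroid α) [N.Finite] (r : ℕ) (Y : ℕ → Set α)
    (hpres : IsPresentation N r Y)
    (hsupp : ∀ e ∈ N.E, IsInterval {i ∈ Set.Icc 1 r | e ∈ Y i}) :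
    (∀ C : Set α, IsCircuit N C →
      IsInterval {i ∈ Set.Icc 1 r | ∃ e ∈ C, e ∈ Y i}) ∧
    (∀ F : Set α, N.IsFlat F → 2 ≤ F.ncard → MatConnected (N ↾ F) →
      IsInterval {i ∈ Set.Icc 1 r | ∃ e ∈ F, e ∈ Y i} ∧
      F = {a ∈ N.E |
        {i ∈ Set.Icc 1 r | a ∈ Y i} ⊆ {i ∈ Set.Icc 1 r | ∃ e ∈ F, e ∈ Y i}}) :=
  statement11_general N r Y hpres hsupp

end Paper
end

section
/- Let L be a finite lattice that is not a chain (i.e., the order on L is not linear). Then there exist finite transversal matroids M and M' such that M and M' are not isomorphic, M and M' have the same configuration, and the lattice of cyclic flats of M (and likewise that of M'), ordered by inclusion, is order-isomorphic to L. -/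
open Set Matroid

namespace Paper

variable {α : Type*} {β : Type*}

/-!
Label each element `e` of a finite set `E` by an upper set `u e` of `L` and put
`cflat x = {e | x ∈ u e}`. The sets `I` with `|I ∩ cflat x| ≤ lrank x = #{w | ¬ x ≤ w}` for all `x`
form a matroid when the labelling is submodular for `lrank`: the `x` at which such a bound is
tight are then closed under joins, which gives augmentation. If moreover every `Ici x` labels more
than `|L|` elements, the cyclic flats are exactly the sets `cflat x`, of rank `lrank x`, and a
Hall-type condition on the labels makes the sets `E \ cflat w`, `w ∈ L`, a presentation.

Take one block of `|L| + 3` elements labelled `Ici z` for each `z`. For incomparable `a`, `b`,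
relabel one element `P` of block `a` by `Ici a ∪ Ici b` and one element `Q` of block `b` by
`Ici (a ⊔ b)`. Every `cflat x` keeps its size, so the two matroids have the same configuration.
They are not isomorphic: the cyclic flats of the first are closed under intersection, whereas in
the second `cflat a ∩ cflat b` contains `P` but no cyclic flat below both `cflat a` and `cflat b`
does.
-/

section LatticeRank

variable {L : Type*} [Lattice L]

noncomputable def lrank (x : L) : ℕ := {w : L | ¬ x ≤ w}.ncard

lemma lrank_bot [OrderBot L] : lrank (⊥ : L) = 0 := by
  simp [lrank]

variable [Fintype L]

lemma lrank_strictMono : StrictMono (lrank : L → ℕ) := fun x y hxy =>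
  Set.ncard_lt_ncard ⟨fun _ hw hyw => hw (hxy.le.trans hyw), fun hsub => hsub hxy.not_ge le_rfl⟩

lemma lrank_add_ncard_Ici (x : L) : lrank x + (Ici x).ncard = Fintype.card L := by
  rw [← Nat.card_eq_fintype_card, ← Set.ncard_add_ncard_compl (Ici x), add_comm]
  rfl

lemma lrank_lt_card (x : L) : lrank x < Fintype.card L := by
  have := lrank_add_ncard_Ici x
  have : 0 < (Ici x).ncard := (Set.ncard_pos (toFinite _)).2 ⟨x, Set.mem_Ici.2 le_rfl⟩
  omega

lemma lrank_sup_add_lrank_inf (x y : L) :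
    lrank (x ⊔ y) + lrank (x ⊓ y) + {w | x ⊓ y ≤ w ∧ ¬ x ≤ w ∧ ¬ y ≤ w}.ncard
      = lrank x + lrank y := by
  have hunion := Set.ncard_union_add_ncard_inter {w : L | ¬ x ≤ w} {w | ¬ y ≤ w}
  have hsplit := Set.ncard_inter_add_ncard_sdiff_eq_ncard
    ({w : L | ¬ x ≤ w} ∩ {w | ¬ y ≤ w}) {w | x ⊓ y ≤ w}
  have hsup : {w : L | ¬ x ≤ w} ∪ {w | ¬ y ≤ w} = {w | ¬ x ⊔ y ≤ w} := by
    ext w; simp only [mem_union, mem_ofPred_eq, sup_le_iff]; tauto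
  have hin : {w : L | ¬ x ≤ w} ∩ {w | ¬ y ≤ w} ∩ {w | x ⊓ y ≤ w}
      = {w | x ⊓ y ≤ w ∧ ¬ x ≤ w ∧ ¬ y ≤ w} := by
    ext w; simp only [mem_inter_iff, mem_ofPred_eq]; tauto
  have hout : ({w : L | ¬ x ≤ w} ∩ {w | ¬ y ≤ w}) \ {w | x ⊓ y ≤ w} = {w | ¬ x ⊓ y ≤ w} := by
    ext w
    simp only [mem_sdiff, mem_inter_iff, mem_ofPred_eq]
    exact ⟨fun h => h.2, fun h => ⟨⟨fun hx => h (inf_le_left.trans hx),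
      fun hy => h (inf_le_right.trans hy)⟩, h⟩⟩
  rw [hsup] at hunion
  rw [hin, hout] at hsplit
  unfold lrank
  omega

end LatticeRank

section CyclicFlatsByRank

variable {M : Matroid α} {G : Set α}

lemma cast_rnk_eq_eRk [M.Finite] (X : Set α) : (rnk M X : ℕ∞) = M.eRk X := by
  obtain ⟨I, hI⟩ := M.exists_isBasis' X
  have hIfin : I.Finite := M.ground_finite.subset hI.indep.subset_ground
  have hmax : IsGreatest {n | ∃ J, M.Indep J ∧ J ⊆ X ∧ J.ncard = n} I.ncard := by
    refine ⟨⟨I, hI.indep, hI.subset, rfl⟩, ?_⟩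
    rintro _ ⟨J, hJ, hJX, rfl⟩
    rw [← Nat.cast_le (α := ℕ∞), (M.ground_finite.subset hJ.subset_ground).cast_ncard_eq,
      hIfin.cast_ncard_eq, hI.encard_eq_eRk]
    exact hJ.encard_le_eRk_of_subset hJX
  rw [rnk, hmax.csSup_eq, hIfin.cast_ncard_eq, hI.encard_eq_eRk]

lemma isFlat_iff_forall_eRk_lt [M.Finite] (hG : G ⊆ M.E) :
    M.IsFlat G ↔ ∀ e ∈ M.E \ G, M.eRk G < M.eRk (insert e G) := by
  rw [isFlat_iff_closure_eq]
  refine ⟨fun hcl e he => ?_, fun h => subset_antisymm (fun e he => ?_) (M.subset_closure G)⟩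
  · rw [eRk_insert_eq_add_one (by rwa [hcl]), ← cast_rnk_eq_eRk]
    exact_mod_cast Nat.lt_succ_self _
  · by_contra heG
    refine (h e ⟨M.closure_subset_ground G he, heG⟩).not_ge ?_
    rw [← M.eRk_closure_eq G]
    exact M.eRk_mono (insert_subset he (M.subset_closure G))

lemma isColoop_restrict_iff [M.Finite] (hG : G ⊆ M.E) :
    IsColoop (M ↾ G) e ↔ M.eRk (G \ {e}) < M.eRk G := by
  refine ⟨fun hcol => not_le.1 fun hle => ?_, fun hlt B hB => not_not.1 fun heB => ?_⟩
  · obtain ⟨B, hB⟩ := M.exists_isBasis (G \ {e}) (sdiff_subset.trans hG)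
    have hBG : M.IsBasis B G := hB.indep.isBasis_of_eRk_ge
      (M.ground_finite.subset hB.indep.subset_ground) (hB.subset.trans sdiff_subset)
      (hle.trans hB.eRk_eq_eRk.ge)
    exact (hB.subset (hcol B hBG.restrict_isBase)).2 rfl
  · rw [isBase_restrict_iff hG] at hB
    refine hlt.not_ge ?_
    rw [← hB.eRk_eq_eRk]
    exact M.eRk_mono fun a ha => ⟨hB.subset ha, fun hae => heB (hae ▸ ha)⟩

lemma cyclicFlat_iff [M.Finite] : CyclicFlat M G ↔ G ⊆ M.E ∧
    (∀ e ∈ M.E \ G, M.eRk G < M.eRk (insert e G)) ∧ ∀ e ∈ G, M.eRk G ≤ M.eRk (G \ {e}) := by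
  refine ⟨fun ⟨hF, hcol⟩ => ?_, fun ⟨hG, hins, hdel⟩ => ?_⟩
  · have hG := hF.subset_ground
    exact ⟨hG, (isFlat_iff_forall_eRk_lt hG).1 hF,
      fun e he => not_lt.1 fun h => hcol e he ((isColoop_restrict_iff hG).2 h)⟩
  · exact ⟨(isFlat_iff_forall_eRk_lt hG).2 hins,
      fun e he h => (hdel e he).not_gt ((isColoop_restrict_iff hG).1 h)⟩

lemma eq_map_of_bijOn {N : Matroid β} {f : α → β} (hf : BijOn f M.E N.E)
    (hind : ∀ I ⊆ M.E, (M.Indep I ↔ N.Indep (f '' I))) : N = M.map f hf.injOn := by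
  refine Matroid.ext_indep hf.image_eq.symm fun I hI => ?_
  obtain ⟨I₀, hI₀E, rfl⟩ := Set.subset_image_iff.1 (hf.image_eq ▸ hI)
  rw [map_indep_iff]
  exact ⟨fun hN => ⟨I₀, (hind I₀ hI₀E).2 hN, rfl⟩,
    fun ⟨J, hJ, hJeq⟩ => hJeq ▸ (hind J hJ.subset_ground).1 hJ⟩

lemma CyclicFlat.image_map [M.Finite] {f : α → β} (hf : InjOn f M.E) (hG : CyclicFlat M G) :
    CyclicFlat (M.map f hf) (f '' G) := by
  obtain ⟨hGE, hins, hdel⟩ := cyclicFlat_iff.1 hG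
  refine cyclicFlat_iff.2 ⟨image_mono hGE, ?_, ?_⟩
  · rintro _ ⟨⟨e, he, rfl⟩, hnot⟩
    rw [← image_insert_eq, eRk_map _ _ (insert_subset he hGE), eRk_map _ _ hGE]
    exact hins e ⟨he, fun heG => hnot (mem_image_of_mem f heG)⟩
  · rintro _ ⟨e, he, rfl⟩
    rw [← image_singleton, ← (hf.mono hGE).image_sdiff_subset (singleton_subset_iff.2 he),
      eRk_map _ _ (sdiff_subset.trans hGE), eRk_map _ _ hGE]
    exact hdel e he

end CyclicFlatsByRank

lemma exists_injOn_of_hall {I : Set α} {R : Set ℕ} (A : ℕ → Set α) (hI : I.Finite)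
    (hR : R.Finite) (hall : ∀ S ⊆ I, S.ncard ≤ {i ∈ R | ∃ e ∈ S, e ∈ A i}.ncard) :
    ∃ φ : α → ℕ, InjOn φ I ∧ ∀ e ∈ I, φ e ∈ R ∧ e ∈ A (φ e) := by
  classical
  have := hI.fintype
  let t : I → Finset ℕ := fun e => hR.toFinset.filter fun i => (e : α) ∈ A i
  obtain ⟨f, hfinj, hft⟩ := (Finset.all_card_le_biUnion_card_iff_exists_injective t).1 fun s => by
    have hs := hall (Subtype.val '' (s : Set I)) (by rintro _ ⟨e, -, rfl⟩; exact e.2)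
    rw [ncard_image_of_injective _ Subtype.val_injective, ncard_coe_finset] at hs
    refine hs.trans_eq ?_
    rw [← ncard_coe_finset]
    congr 1
    ext i
    simp only [t, Finset.coe_biUnion, Finset.coe_filter, Finite.mem_toFinset]
    aesop
  refine ⟨fun a => if ha : a ∈ I then f ⟨a, ha⟩ else 0, fun a ha b hb hab => ?_, fun a ha => ?_⟩
  · simp only [dif_pos ha, dif_pos hb] at hab
    exact congrArg Subtype.val (hfinj hab)
  · simpa [dif_pos ha, t] using hft ⟨a, ha⟩

lemma ncard_sep_of_bijOn {L : Type*} {w : ℕ → L} {s : Set ℕ} (hw : BijOn w s univ) (T : Set L) :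
    {i ∈ s | w i ∈ T}.ncard = T.ncard := by
  change (s ∩ w ⁻¹' T).ncard = _
  rw [← (hw.injOn.mono inter_subset_left).ncard_image, image_inter_preimage,
    hw.image_eq, univ_inter]

section Labelling

variable {L : Type*} {E : Set α} {u : α → Set L} {I J X G : Set α} {e e' : α} {x y : L}

def cflat (E : Set α) (u : α → Set L) (x : L) : Set α := {e ∈ E | x ∈ u e}

lemma cflat_subset (x : L) : cflat E u x ⊆ E := sep_subset _ _

variable [Lattice L]

def CFIndep (E : Set α) (u : α → Set L) (I : Set α) : Prop :=
  I ⊆ E ∧ ∀ x, (I ∩ cflat E u x).ncard ≤ lrank x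

lemma CFIndep.subset (hE : E.Finite) (hJ : CFIndep E u J) (hIJ : I ⊆ J) : CFIndep E u I :=
  ⟨hIJ.trans hJ.1, fun x => (ncard_le_ncard (inter_subset_inter_left _ hIJ)
    ((hE.subset hJ.1).inter_of_left _)).trans (hJ.2 x)⟩

lemma CFIndep.exchange (hE : E.Finite) (hI : CFIndep E u I) (he : e ∈ I) (he' : e' ∈ E)
    (hcov : ∀ x, e' ∈ cflat E u x → e ∈ cflat E u x) : CFIndep E u (insert e' (I \ {e})) := by
  classical
  refine ⟨insert_subset he' (sdiff_subset.trans hI.1), fun x => le_trans ?_ (hI.2 x)⟩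
  refine ncard_le_ncard_of_injOn (fun a => if a = e' then e else a) ?_ ?_
    ((hE.subset hI.1).inter_of_left _)
  · rintro a ⟨ha, hax⟩
    by_cases hae' : a = e'
    · subst hae'
      simpa using ⟨he, hcov x hax⟩
    · simp only [if_neg hae']
      exact ⟨(ha.resolve_left hae').1, hax⟩
  · rintro a ⟨ha, -⟩ b ⟨hb, -⟩ hab
    by_cases hae' : a = e' <;> by_cases hbe' : b = e' <;>
      simp only [hae', hbe', if_true, if_false] at hab ⊢
    · exact absurd hab.symm (hb.resolve_left hbe').2
    · exact absurd hab (ha.resolve_left hae').2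
    · exact hab

def IsTight (E : Set α) (u : α → Set L) (I : Set α) (x : L) : Prop :=
  (I ∩ cflat E u x).ncard = lrank x

lemma CFIndep.exists_isTight_of_not_insert (hI : CFIndep E u I) (hIfin : I.Finite)
    (he : e ∈ E \ I) (hnot : ¬ CFIndep E u (insert e I)) :
    ∃ x, IsTight E u I x ∧ e ∈ cflat E u x := by
  obtain ⟨x, hx⟩ : ∃ x, lrank x < (insert e I ∩ cflat E u x).ncard := by
    simpa [CFIndep, insert_subset_iff, he.1, hI.1] using hnot
  have hex : e ∈ cflat E u x := by
    by_contra hex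
    rw [insert_inter_of_notMem hex] at hx
    exact (hI.2 x).not_gt hx
  rw [insert_inter_of_mem hex, ncard_insert_of_notMem (fun h => he.2 h.1)
    (hIfin.inter_of_left _)] at hx
  exact ⟨x, le_antisymm (hI.2 x) (by omega), hex⟩

noncomputable def rankFormula (E : Set α) (u : α → Set L) (X : Set α) : ℕ :=
  ⨅ x : L, lrank x + (X \ cflat E u x).ncard

lemma rankFormula_le (X : Set α) (x : L) :
    rankFormula E u X ≤ lrank x + (X \ cflat E u x).ncard :=
  ciInf_le (OrderBot.bddBelow _) x

lemma le_rankFormula [Nonempty L] {n : ℕ}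
    (hn : ∀ x : L, n ≤ lrank x + (X \ cflat E u x).ncard) : n ≤ rankFormula E u X :=
  le_ciInf hn

lemma exists_rankFormula_eq [Nonempty L] [Finite L] (X : Set α) :
    ∃ x : L, rankFormula E u X = lrank x + (X \ cflat E u x).ncard :=
  (exists_eq_ciInf_of_finite).imp fun _ hx => hx.symm

lemma CFIndep.ncard_le_rankFormula [Nonempty L] (hE : E.Finite) (hI : CFIndep E u I)
    (hIX : I ⊆ X) (hX : X.Finite) : I.ncard ≤ rankFormula E u X := by
  refine le_rankFormula fun x => ?_
  rw [← ncard_inter_add_ncard_sdiff_eq_ncard I (cflat E u x) (hE.subset hI.1)]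
  exact add_le_add (hI.2 x) (ncard_le_ncard (sdiff_subset_sdiff_left hIX) hX.sdiff)

lemma exists_eq_cflat_of_rankFormula [Nonempty L] [Finite L] (hG : G.Finite)
    (hins : ∀ e ∈ E \ G, rankFormula E u G < rankFormula E u (insert e G))
    (hdel : ∀ e ∈ G, rankFormula E u G ≤ rankFormula E u (G \ {e})) : ∃ x, G = cflat E u x := by
  obtain ⟨x, hx⟩ := exists_rankFormula_eq (E := E) (u := u) G
  refine ⟨x, subset_antisymm (fun e heG => not_not.1 fun hex => ?_)
    (fun e hex => not_not.1 fun heG => ?_)⟩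
  · have heGx : e ∈ G \ cflat E u x := ⟨heG, hex⟩
    have := rankFormula_le (E := E) (u := u) (G \ {e}) x
    rw [sdiff_right_comm, ncard_sdiff_singleton_of_mem heGx] at this
    have := (ncard_pos hG.sdiff).2 ⟨e, heGx⟩
    have := hdel e heG
    omega
  · have := rankFormula_le (E := E) (u := u) (insert e G) x
    rw [insert_sdiff_of_mem _ hex] at this
    have := hins e ⟨cflat_subset x hex, heG⟩
    omega

variable [Fintype L]

structure Admissible (E : Set α) (u : α → Set L) : Prop where
  finite : E.Finite
  isUpperSet : ∀ e ∈ E, IsUpperSet (u e)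
  submodular : ∀ x y : L, lrank (x ⊔ y) + lrank (x ⊓ y)
    + ((cflat E u x ∩ cflat E u y) \ cflat E u (x ⊓ y)).ncard ≤ lrank x + lrank y
  card_lt_ncard_principal : ∀ x : L, Fintype.card L < {e ∈ E | u e = Ici x}.ncard
  hall : ∀ S ⊆ E, (∀ x, (S ∩ cflat E u x).ncard ≤ lrank x) →
    S.ncard + (⋂ e ∈ S, u e).ncard ≤ Fintype.card L

namespace Admissible

lemma cflat_mono (h : Admissible E u) (hxy : x ≤ y) : cflat E u x ⊆ cflat E u y :=
  fun e he => ⟨he.1, h.isUpperSet e he.1 hxy he.2⟩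

lemma cflat_finite (h : Admissible E u) (x : L) : (cflat E u x).Finite :=
  h.finite.subset (cflat_subset x)

lemma card_lt_ncard_cflat_sdiff (h : Admissible E u) (hxy : ¬ x ≤ y) :
    Fintype.card L < (cflat E u x \ cflat E u y).ncard := by
  refine (h.card_lt_ncard_principal x).trans_le (ncard_le_ncard (fun e ⟨heE, hex⟩ => ?_)
    (h.cflat_finite x).sdiff)
  exact ⟨⟨heE, hex ▸ Set.mem_Ici.2 le_rfl⟩, fun hy => hxy (Set.mem_Ici.1 (hex ▸ hy.2))⟩

lemma cflat_subset_cflat_iff (h : Admissible E u) : cflat E u x ⊆ cflat E u y ↔ x ≤ y := by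
  refine ⟨fun hsub => not_not.1 fun hxy => ?_, h.cflat_mono⟩
  have := h.card_lt_ncard_cflat_sdiff hxy
  rw [sdiff_eq_empty.2 hsub, ncard_empty] at this
  omega

lemma cflat_injective (h : Admissible E u) : Function.Injective (cflat E u) := fun _ _ hxy =>
  le_antisymm (h.cflat_subset_cflat_iff.1 hxy.le) (h.cflat_subset_cflat_iff.1 hxy.ge)

lemma isTight_sup (h : Admissible E u) (hI : CFIndep E u I) (hx : IsTight E u I x)
    (hy : IsTight E u I y) : IsTight E u I (x ⊔ y) := by
  have hIfin : I.Finite := h.finite.subset hI.1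
  have hsum := ncard_union_add_ncard_inter (I ∩ cflat E u x) (I ∩ cflat E u y)
    (hIfin.inter_of_left _) (hIfin.inter_of_left _)
  rw [← inter_union_distrib_left, ← inter_inter_distrib_left] at hsum
  have hinter : (I ∩ (cflat E u x ∩ cflat E u y)).ncard ≤ (I ∩ cflat E u (x ⊓ y)).ncard
      + ((cflat E u x ∩ cflat E u y) \ cflat E u (x ⊓ y)).ncard := by
    refine (ncard_le_ncard (fun e he => ?_) ((hIfin.inter_of_left _).union
      ((h.cflat_finite x).inter_of_left _).sdiff)).trans (ncard_union_le _ _)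
    by_cases hm : e ∈ cflat E u (x ⊓ y)
    · exact Or.inl ⟨he.1, hm⟩
    · exact Or.inr ⟨he.2, hm⟩
  have hunion : (I ∩ (cflat E u x ∪ cflat E u y)).ncard ≤ (I ∩ cflat E u (x ⊔ y)).ncard :=
    ncard_le_ncard (inter_subset_inter_right _ (union_subset (h.cflat_mono le_sup_left)
      (h.cflat_mono le_sup_right))) (hIfin.inter_of_left _)
  have := h.submodular x y
  have := hI.2 (x ⊓ y)
  have := hI.2 (x ⊔ y)
  unfold IsTight at *
  omega

variable [OrderBot L]

lemma exists_insert_cfIndep (h : Admissible E u) (hI : CFIndep E u I) (hXE : X ⊆ E)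
    (hlt : I.ncard < rankFormula E u X) : ∃ e ∈ X \ I, CFIndep E u (insert e I) := by
  classical
  by_contra! hblock
  have hIfin : I.Finite := h.finite.subset hI.1
  -- the join of all tight elements is tight, and its flat catches every element of `X \ I`
  set t := (Finset.univ.filter (IsTight E u I)).sup id
  have ht : IsTight E u I t := by
    refine Finset.sup_induction (p := IsTight E u I) ?_ (fun _ ha _ hb => h.isTight_sup hI ha hb)
      (fun x hx => (Finset.mem_filter.1 hx).2)
    simpa [IsTight, lrank_bot] using hI.2 ⊥
  have hXt : X \ cflat E u t ⊆ I := fun e he => not_not.1 fun heI => by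
    obtain ⟨x, hx, hex⟩ := hI.exists_isTight_of_not_insert hIfin ⟨hXE he.1, heI⟩
      (hblock e ⟨he.1, heI⟩)
    exact he.2 (h.cflat_mono (Finset.le_sup (f := id) (Finset.mem_filter.2
      ⟨Finset.mem_univ x, hx⟩)) hex)
  have := rankFormula_le (E := E) (u := u) X t
  have := ncard_le_ncard (subset_sdiff.2 ⟨hXt, disjoint_sdiff_left⟩) hIfin.sdiff
  have := ncard_inter_add_ncard_sdiff_eq_ncard I (cflat E u t) hIfin
  unfold IsTight at ht
  omega

lemma exists_cfIndep_ncard_eq (h : Admissible E u) (hXE : X ⊆ E) {n : ℕ}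
    (hn : n ≤ rankFormula E u X) : ∃ I, CFIndep E u I ∧ I ⊆ X ∧ I.ncard = n := by
  induction n with
  | zero => exact ⟨∅, ⟨empty_subset _, by simp⟩, empty_subset _, ncard_empty _⟩
  | succ n ih =>
    obtain ⟨I, hI, hIX, rfl⟩ := ih (by omega)
    obtain ⟨e, he, hins⟩ := h.exists_insert_cfIndep hI hXE (by omega)
    exact ⟨insert e I, hins, insert_subset he.1 hIX,
      ncard_insert_of_notMem he.2 (h.finite.subset hI.1)⟩

noncomputable def matroid (h : Admissible E u) : Matroid α :=
  (IndepMatroid.ofFinite h.finite (CFIndep E u) ⟨empty_subset _, by simp⟩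
    (fun _ _ hJ hIJ => hJ.subset h.finite hIJ)
    (fun I J hI hJ hlt => by
      have hIJ : I ∪ J ⊆ E := union_subset hI.1 hJ.1
      obtain ⟨e, he, hins⟩ := h.exists_insert_cfIndep hI hIJ
        (hlt.trans_le (hJ.ncard_le_rankFormula h.finite subset_union_right
          (h.finite.subset hIJ)))
      exact ⟨e, he.1.resolve_left he.2, he.2, hins⟩)
    (fun _ hI => hI.1)).matroid

@[simp] lemma matroid_E (h : Admissible E u) : h.matroid.E = E := rfl

@[simp] lemma matroid_indep_iff (h : Admissible E u) : h.matroid.Indep I ↔ CFIndep E u I :=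
  Iff.rfl

instance (h : Admissible E u) : h.matroid.Finite := ⟨h.finite⟩

lemma eRk_matroid (h : Admissible E u) (hX : X ⊆ E) :
    h.matroid.eRk X = rankFormula E u X := by
  have hXfin := h.finite.subset hX
  refine le_antisymm (eRk_le_iff.2 fun I hIX hI => ?_) (le_eRk_iff.2 ?_)
  · rw [← (hXfin.subset hIX).cast_ncard_eq]
    exact_mod_cast hI.ncard_le_rankFormula h.finite hIX hXfin
  · obtain ⟨I, hI, hIX, hIn⟩ := h.exists_cfIndep_ncard_eq hX le_rfl
    exact ⟨I, hIX, hI, by rw [← (hXfin.subset hIX).cast_ncard_eq, hIn]⟩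

lemma rnk_matroid (h : Admissible E u) (hX : X ⊆ E) : rnk h.matroid X = rankFormula E u X := by
  exact_mod_cast (cast_rnk_eq_eRk X).trans (h.eRk_matroid hX)

lemma rankFormula_cflat (h : Admissible E u) (x : L) :
    rankFormula E u (cflat E u x) = lrank x := by
  refine le_antisymm (by simpa using rankFormula_le (E := E) (u := u) (cflat E u x) x)
    (le_rankFormula fun y => ?_)
  by_cases hxy : x ≤ y
  · exact (lrank_strictMono.monotone hxy).trans (Nat.le_add_right _ _)
  · have := h.card_lt_ncard_cflat_sdiff hxy
    have := lrank_lt_card x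
    omega

lemma lrank_lt_rankFormula_insert (h : Admissible E u) (he : e ∈ E \ cflat E u x) :
    lrank x < rankFormula E u (insert e (cflat E u x)) := by
  refine le_rankFormula fun y => ?_
  have hfin : (insert e (cflat E u x) \ cflat E u y).Finite :=
    ((h.cflat_finite x).insert e).sdiff
  by_cases hxy : x ≤ y
  · by_cases hey : e ∈ cflat E u y
    · have := lrank_strictMono (lt_of_le_of_ne hxy (by rintro rfl; exact he.2 hey))
      omega
    · have := lrank_strictMono.monotone hxy
      have := (ncard_pos hfin).2 ⟨e, mem_insert e _, hey⟩
      omega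
  · have := h.card_lt_ncard_cflat_sdiff hxy
    have := ncard_le_ncard (sdiff_subset_sdiff_left (subset_insert e (cflat E u x))) hfin
    have := lrank_lt_card x
    omega

lemma lrank_le_rankFormula_sdiff (h : Admissible E u) (he : e ∈ cflat E u x) :
    lrank x ≤ rankFormula E u (cflat E u x \ {e}) := by
  obtain ⟨I, hI, hIx, hIn⟩ :=
    h.exists_cfIndep_ncard_eq (cflat_subset x) (h.rankFormula_cflat x).ge
  suffices ∃ J, CFIndep E u J ∧ J ⊆ cflat E u x \ {e} ∧ J.ncard = lrank x by
    obtain ⟨J, hJ, hJx, hJn⟩ := this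
    exact hJn ▸ hJ.ncard_le_rankFormula h.finite hJx (h.cflat_finite x).sdiff
  by_cases heI : e ∈ I
  · -- swap `e` for an element labelled exactly `Ici x`: there are too many to all lie in `I`
    obtain ⟨e', ⟨he'E, he'x⟩, he'I⟩ := exists_mem_notMem_of_ncard_lt_ncard
      ((hIn.trans_lt (lrank_lt_card x)).trans (h.card_lt_ncard_principal x))
      (h.finite.subset hI.1)
    refine ⟨insert e' (I \ {e}), hI.exchange h.finite heI he'E fun y hy => ?_, ?_,
      by rw [ncard_exchange he'I heI, hIn]⟩
    · exact ⟨he.1, h.isUpperSet e he.1 (Set.mem_Ici.1 (he'x ▸ hy.2)) he.2⟩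
    · refine insert_subset ⟨⟨he'E, he'x ▸ Set.mem_Ici.2 le_rfl⟩, ?_⟩
        (sdiff_subset_sdiff_left hIx)
      rintro rfl
      exact he'I heI
  · exact ⟨I, hI, fun a ha => ⟨hIx ha, fun hae => heI (hae ▸ ha)⟩, hIn⟩

lemma cyclicFlat_cflat (h : Admissible E u) (x : L) : CyclicFlat h.matroid (cflat E u x) := by
  refine cyclicFlat_iff.2 ⟨cflat_subset x, fun e he => ?_, fun e he => ?_⟩
  · rw [h.eRk_matroid (insert_subset he.1 (cflat_subset x)), h.eRk_matroid (cflat_subset x),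
      h.rankFormula_cflat]
    exact_mod_cast h.lrank_lt_rankFormula_insert he
  · rw [h.eRk_matroid (sdiff_subset.trans (cflat_subset x)), h.eRk_matroid (cflat_subset x),
      h.rankFormula_cflat]
    exact_mod_cast h.lrank_le_rankFormula_sdiff he

lemma cyclicFlat_iff (h : Admissible E u) : CyclicFlat h.matroid G ↔ ∃ x, G = cflat E u x := by
  refine ⟨fun hG => ?_, by rintro ⟨x, rfl⟩; exact h.cyclicFlat_cflat x⟩
  obtain ⟨hGE, hins, hdel⟩ := Paper.cyclicFlat_iff.1 hG
  refine exists_eq_cflat_of_rankFormula (h.finite.subset hGE) (fun e he => ?_) (fun e he => ?_)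
  · have := hins e he
    rwa [h.eRk_matroid (insert_subset he.1 hGE), h.eRk_matroid hGE, Nat.cast_lt] at this
  · have := hdel e he
    rwa [h.eRk_matroid (sdiff_subset.trans hGE), h.eRk_matroid hGE, Nat.cast_le] at this

noncomputable def cyclicFlatIso (h : Admissible E u) : L ≃o {F // CyclicFlat h.matroid F} :=
  OrderIso.ofSurjective
    (OrderEmbedding.ofMapLEIff (fun x => ⟨cflat E u x, h.cyclicFlat_cflat x⟩)
      fun _ _ => h.cflat_subset_cflat_iff)
    fun F => (h.cyclicFlat_iff.1 F.2).imp fun _ hx => Subtype.ext hx.symm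

@[simp] lemma coe_cyclicFlatIso (h : Admissible E u) (x : L) :
    (h.cyclicFlatIso x : Set α) = cflat E u x := rfl

lemma rnk_cflat (h : Admissible E u) (x : L) : rnk h.matroid (cflat E u x) = lrank x := by
  rw [h.rnk_matroid (cflat_subset x), h.rankFormula_cflat]

lemma isTransversalMatroid (h : Admissible E u) : IsTransversalMatroid h.matroid := by
  obtain ⟨w, hw⟩ := (finite_Icc 1 (Fintype.card L)).exists_bijOn_of_encard_eq
    (t := (univ : Set L)) (by
      rw [← (finite_Icc _ _).cast_ncard_eq, ncard_Icc_nat, encard_univ,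
        ENat.card_eq_coe_fintype_card]
      simp)
  refine ⟨Fintype.card L, fun i => E \ cflat E u (w i), fun _ _ => sdiff_subset, fun I => ?_⟩
  rw [matroid_indep_iff, matroid_E]
  refine ⟨fun hI => ⟨hI.1, exists_injOn_of_hall (fun i => E \ cflat E u (w i))
    (h.finite.subset hI.1) (finite_Icc _ _) fun S hSI => ?_⟩,
    fun ⟨hIE, φ, hφ, hφA⟩ => ⟨hIE, fun x => ?_⟩⟩
  · have hSE := hSI.trans hI.1
    have hnbr : {i ∈ Icc 1 (Fintype.card L) | ∃ e ∈ S, e ∈ E \ cflat E u (w i)}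
        = {i ∈ Icc 1 (Fintype.card L) | w i ∈ (⋂ e ∈ S, u e)ᶜ} := by
      ext i
      simp only [mem_ofPred_eq, mem_sdiff, cflat, mem_compl_iff, mem_iInter, not_forall]
      exact and_congr_right fun _ =>
        ⟨fun ⟨e, he, heE, hei⟩ => ⟨e, he, fun hw => hei ⟨heE, hw⟩⟩,
          fun ⟨e, he, hei⟩ => ⟨e, he, hSE he, fun hw => hei hw.2⟩⟩
    rw [hnbr, ncard_sep_of_bijOn hw]
    have := h.hall S hSE (hI.subset h.finite hSI).2
    have := ncard_add_ncard_compl (⋂ e ∈ S, u e)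
    rw [Nat.card_eq_fintype_card] at this
    omega
  · refine (ncard_le_ncard_of_injOn φ (fun a ha => ?_) (hφ.mono inter_subset_left)
      ((finite_Icc 1 (Fintype.card L)).sep _)).trans_eq
      (ncard_sep_of_bijOn hw {y | ¬ x ≤ y})
    obtain ⟨hφa, haE, haw⟩ := hφA a ha.1
    exact ⟨hφa, fun hx => haw ⟨haE, h.isUpperSet a haE hx ha.2.2⟩⟩

variable {E' : Set β} {u' : β → Set L}

theorem not_isIso (h : Admissible E u) (h' : Admissible E' u')
    (hinter : ∀ x y, cflat E u x ∩ cflat E u y = cflat E u (x ⊓ y)) {a b : L}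
    (hab : ∀ z, cflat E' u' a ∩ cflat E' u' b ≠ cflat E' u' z) :
    ¬ IsIso h.matroid h'.matroid := by
  rintro ⟨f, hf, hind⟩
  have hinj : InjOn f E := hf.injOn
  have hσ : ∀ x, ∃ y, f '' cflat E u x = cflat E' u' y := fun x => by
    rw [← h'.cyclicFlat_iff, eq_map_of_bijOn hf hind]
    exact (h.cyclicFlat_cflat x).image_map hf.injOn
  choose σ hσ using hσ
  have hσinj : Function.Injective σ := fun x y hxy => h.cflat_injective <|
    (hinj.image_eq_image_iff (cflat_subset x) (cflat_subset y)).1 (by rw [hσ, hσ, hxy])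
  obtain ⟨x, rfl⟩ := Finite.surjective_of_injective hσinj a
  obtain ⟨y, rfl⟩ := Finite.surjective_of_injective hσinj b
  refine hab (σ (x ⊓ y)) ?_
  rw [← hσ, ← hσ, ← hσ, ← hinter, hinj.image_inter (cflat_subset x) (cflat_subset y)]

theorem sameConfig (h : Admissible E u) (h' : Admissible E' u')
    (hcard : ∀ x, (cflat E' u' x).ncard = (cflat E u x).ncard) :
    SameConfig h.matroid h'.matroid := by
  refine ⟨h.cyclicFlatIso.symm.trans h'.cyclicFlatIso, fun F => ?_⟩
  obtain ⟨x, rfl⟩ := h.cyclicFlatIso.surjective F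
  simp only [OrderIso.trans_apply, OrderIso.symm_apply_apply, coe_cyclicFlatIso]
  exact ⟨hcard x, by rw [h.rnk_cflat, h'.rnk_cflat]⟩

end Admissible

end Labelling

section Construction

variable {L : Type*} {P Q : α}

lemma exists_blocks [Finite L] [Nonempty L] [Infinite α] (m : ℕ) :
    ∃ (E : Set α) (z : α → L), E.Finite ∧ ∀ x, m ≤ {e ∈ E | z e = x}.ncard := by
  have := Fintype.ofFinite L
  let g : L × Fin m ↪ α :=
    (Fintype.equivFin _).toEmbedding.trans (Fin.valEmbedding.trans (Infinite.natEmbedding α))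
  refine ⟨range g, Function.extend g Prod.fst fun _ => Classical.arbitrary L, finite_range g,
    fun x => ?_⟩
  have hblock : range (fun i : Fin m => g (x, i)) ⊆
      {e ∈ range g | Function.extend g Prod.fst (fun _ => Classical.arbitrary L) e = x} := by
    rintro _ ⟨i, rfl⟩
    exact ⟨mem_range_self _, g.injective.extend_apply _ _ _⟩
  refine le_of_eq_of_le ?_ (ncard_le_ncard hblock ((finite_range g).sep _))
  rw [ncard_range_of_injective fun i j hij => (Prod.ext_iff.1 (g.injective hij)).2,
    Nat.card_eq_fintype_card, Fintype.card_fin]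

lemma ncard_inter_pair (hPQ : P ≠ Q) (s : Set α) [Decidable (P ∈ s)] [Decidable (Q ∈ s)] :
    (s ∩ {P, Q}).ncard = (if P ∈ s then 1 else 0) + (if Q ∈ s then 1 else 0) := by
  by_cases hP : P ∈ s <;> by_cases hQ : Q ∈ s <;>
    simp [hP, hQ, inter_insert_of_mem, inter_insert_of_notMem, ncard_pair hPQ]

variable [Lattice L] {E : Set α} {z : α → L} {a b : L}

def twistedLabel [DecidableEq α] (z : α → L) (P Q : α) (a b : L) (e : α) : Set L :=
  if e = P then Ici a ∪ Ici b else if e = Q then Ici (a ⊔ b) else Ici (z e)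

lemma cflat_principal_inter (x y : L) :
    cflat E (fun e => Ici (z e)) x ∩ cflat E (fun e => Ici (z e)) y
      = cflat E (fun e => Ici (z e)) (x ⊓ y) := by
  ext e
  simp only [cflat, mem_inter_iff, mem_ofPred_eq, Set.mem_Ici, le_inf_iff]
  tauto

lemma ncard_cflat_twisted [DecidableEq α] (hE : E.Finite) (hP : P ∈ E) (hQ : Q ∈ E)
    (hPQ : P ≠ Q) (hzP : z P = a) (hzQ : z Q = b) (x : L) :
    (cflat E (twistedLabel z P Q a b) x).ncard = (cflat E (fun e => Ici (z e)) x).ncard := by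
  classical
  have hout : cflat E (twistedLabel z P Q a b) x \ {P, Q}
      = cflat E (fun e => Ici (z e)) x \ {P, Q} := by
    ext e
    simp only [cflat, mem_sdiff, mem_ofPred_eq, mem_insert_iff, mem_singleton_iff, not_or]
    constructor <;> rintro ⟨⟨he, hx⟩, hP', hQ'⟩ <;> simp_all [twistedLabel]
  -- `[a ≤ x ∨ b ≤ x] + [a ⊔ b ≤ x] = [a ≤ x] + [b ≤ x]`
  have hin : (cflat E (twistedLabel z P Q a b) x ∩ {P, Q}).ncard
      = (cflat E (fun e => Ici (z e)) x ∩ {P, Q}).ncard := by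
    rw [ncard_inter_pair hPQ, ncard_inter_pair hPQ]
    simp only [cflat, mem_ofPred_eq, twistedLabel, if_pos, if_neg hPQ.symm, hP, hQ, hzP, hzQ,
      Set.mem_union, Set.mem_Ici, sup_le_iff, true_and]
    split_ifs <;> tauto
  rw [← ncard_inter_add_ncard_sdiff_eq_ncard _ {P, Q} (hE.subset (cflat_subset x)), hin, hout,
    ncard_inter_add_ncard_sdiff_eq_ncard _ _ (hE.subset (cflat_subset x))]

variable [Fintype L]

lemma cflat_twisted_inter_ne [DecidableEq α] (h : Admissible E (twistedLabel z P Q a b))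
    (hP : P ∈ E) (hab : ¬ a ≤ b) (hba : ¬ b ≤ a) (w : L) :
    cflat E (twistedLabel z P Q a b) a ∩ cflat E (twistedLabel z P Q a b) b
      ≠ cflat E (twistedLabel z P Q a b) w := by
  intro heq
  have hwa : w ≤ a := h.cflat_subset_cflat_iff.1 (heq ▸ inter_subset_left)
  have hwb : w ≤ b := h.cflat_subset_cflat_iff.1 (heq ▸ inter_subset_right)
  have hPw : P ∈ cflat E (twistedLabel z P Q a b) w :=
    heq ▸ ⟨⟨hP, by simp [twistedLabel]⟩, ⟨hP, by simp [twistedLabel]⟩⟩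
  obtain ha | hb : a ≤ w ∨ b ≤ w := by simpa [twistedLabel] using hPw.2
  · exact hab (ha.trans hwb)
  · exact hba (hb.trans hwa)

variable {u : α → Set L}

lemma submodular_of_principal_off (hu : ∀ e ∈ E, e ≠ P → u e = Ici (z e)) (x y : L) :
    lrank (x ⊔ y) + lrank (x ⊓ y) + ((cflat E u x ∩ cflat E u y) \ cflat E u (x ⊓ y)).ncard
      ≤ lrank x + lrank y := by
  have hP : (cflat E u x ∩ cflat E u y) \ cflat E u (x ⊓ y) ⊆ {P} := by
    rintro e ⟨⟨hx, hy⟩, hxy⟩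
    by_contra heP
    have hx2 := hx.2
    have hy2 := hy.2
    refine hxy ⟨hx.1, ?_⟩
    rw [hu e hx.1 heP] at hx2 hy2 ⊢
    exact le_inf hx2 hy2
  suffices ((cflat E u x ∩ cflat E u y) \ cflat E u (x ⊓ y)).ncard
      ≤ {w | x ⊓ y ≤ w ∧ ¬ x ≤ w ∧ ¬ y ≤ w}.ncard by
    have := lrank_sup_add_lrank_inf x y
    omega
  obtain hempty | ⟨e, hx, hxy⟩ :=
    ((cflat E u x ∩ cflat E u y) \ cflat E u (x ⊓ y)).eq_empty_or_nonempty
  · simp [hempty]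
  -- only `P` can lie in the overlap, and then `x` and `y` are incomparable, so that `x ⊓ y`
  -- itself is counted on the right
  refine (ncard_le_ncard hP).trans (ncard_singleton P ▸ ?_)
  refine Nat.one_le_iff_ne_zero.2 (ncard_ne_zero_of_mem (a := x ⊓ y) ⟨le_rfl, ?_, ?_⟩)
  · exact fun hle => hxy (by rw [inf_eq_left.2 (le_inf_iff.1 hle).2]; exact hx.1)
  · exact fun hle => hxy (by rw [inf_eq_right.2 (le_inf_iff.1 hle).1]; exact hx.2)

variable [OrderBot L]

lemma hall_of_principal_off (hE : E.Finite) (hu : ∀ e ∈ E, e ≠ P → u e = Ici (z e))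
    (S : Set α) (hSE : S ⊆ E) (hS : ∀ x, (S ∩ cflat E u x).ncard ≤ lrank x) :
    S.ncard + (⋂ e ∈ S, u e).ncard ≤ Fintype.card L := by
  classical
  have hS₀ : (S \ {P}).Finite := (hE.subset hSE).sdiff
  set v := hS₀.toFinset.sup z
  have hS₀v : S \ {P} ⊆ cflat E u v := fun e he => ⟨hSE he.1, by
    rw [hu e (hSE he.1) he.2]
    exact Finset.le_sup (f := z) (hS₀.mem_toFinset.2 he)⟩
  have hWv : ⋂ e ∈ S, u e ⊆ Ici v := fun w hw => Finset.sup_le fun e he => by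
    have he' := hS₀.mem_toFinset.1 he
    have := mem_iInter₂.1 hw e he'.1
    rwa [hu e (hSE he'.1) he'.2] at this
  have := lrank_add_ncard_Ici v
  by_cases hPv : P ∈ S → v ∈ u P
  · have hSv : S ⊆ cflat E u v := fun e he => by
      by_cases heP : e = P
      · exact ⟨hSE he, heP ▸ hPv (heP ▸ he)⟩
      · exact hS₀v ⟨he, heP⟩
    have := hS v
    rw [inter_eq_self_of_subset_left hSv] at this
    have := ncard_le_ncard hWv
    omega
  · obtain ⟨hPS, hvP⟩ := Classical.not_imp.1 hPv
    have hW : ⋂ e ∈ S, u e ⊆ Ici v \ {v} := fun w hw =>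
      ⟨hWv hw, fun hwv => hvP (mem_singleton_iff.1 hwv ▸ mem_iInter₂.1 hw P hPS)⟩
    have := (ncard_le_ncard (t := S ∩ cflat E u v) (fun e he => ⟨he.1, hS₀v he⟩)
      ((hE.subset hSE).inter_of_left _)).trans (hS v)
    have := ncard_sdiff_singleton_add_one hPS (hE.subset hSE)
    have := ncard_le_ncard hW
    rw [ncard_sdiff_singleton_of_mem (Set.mem_Ici.2 le_rfl)] at this
    have := (ncard_pos (toFinite (Ici v))).2 ⟨v, Set.mem_Ici.2 le_rfl⟩
    omega

lemma Admissible.of_principal_off (hE : E.Finite) (hu : ∀ e ∈ E, e ≠ P → u e = Ici (z e))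
    (hP : IsUpperSet (u P)) (hcard : ∀ x : L, Fintype.card L < {e ∈ E | u e = Ici x}.ncard) :
    Admissible E u where
  finite := hE
  isUpperSet e he := by
    by_cases heP : e = P
    · exact heP ▸ hP
    · exact hu e he heP ▸ isUpperSet_Ici _
  submodular := submodular_of_principal_off hu
  card_lt_ncard_principal := hcard
  hall := hall_of_principal_off hE hu

lemma admissible_principal (hE : E.Finite)
    (hz : ∀ x, Fintype.card L < {e ∈ E | z e = x}.ncard) : Admissible E fun e => Ici (z e) := by
  obtain ⟨P, -⟩ := nonempty_of_ncard_ne_zero (hz ⊥).ne_bot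
  refine Admissible.of_principal_off (P := P) hE (fun _ _ _ => rfl) (isUpperSet_Ici _)
    fun x => (hz x).trans_le (ncard_le_ncard (fun e ⟨he, hzx⟩ => ⟨he, by rw [hzx]⟩)
      (hE.sep _))

lemma admissible_twisted [DecidableEq α] (hE : E.Finite)
    (hz : ∀ x, Fintype.card L + 2 < {e ∈ E | z e = x}.ncard) :
    Admissible E (twistedLabel z P Q a b) := by
  refine Admissible.of_principal_off (z := Function.update z Q (a ⊔ b)) (P := P) hE
    (fun e _ heP => ?_)
    (by simpa [twistedLabel] using (isUpperSet_Ici a).union (isUpperSet_Ici b)) fun x => ?_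
  · by_cases heQ : e = Q
    · subst heQ
      simp [twistedLabel, heP]
    · simp [twistedLabel, heP, heQ]
  · have hsub : {e ∈ E | z e = x} \ {P, Q} ⊆ {e ∈ E | twistedLabel z P Q a b e = Ici x} := by
      rintro e ⟨⟨he, rfl⟩, hPQ⟩
      simp only [mem_insert_iff, mem_singleton_iff, not_or] at hPQ
      exact ⟨he, by simp [twistedLabel, hPQ.1, hPQ.2]⟩
    have := ncard_le_ncard_sdiff_add_ncard {e ∈ E | z e = x} {P, Q}
    have := ncard_insert_le P {Q}
    have := ncard_le_ncard hsub (hE.sep _)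
    have := hz x
    rw [ncard_singleton] at *
    omega

end Construction

theorem statement18 (L : Type*) [Lattice L] [Fintype L]
    (hL : ∃ x y : L, ¬ x ≤ y ∧ ¬ y ≤ x) :
    ∃ M M' : Matroid ℕ, M.Finite ∧ M'.Finite ∧
      IsTransversalMatroid M ∧ IsTransversalMatroid M' ∧
      ¬ IsIso M M' ∧ SameConfig M M' ∧
      Nonempty ({F : Set ℕ // CyclicFlat M F} ≃o L) ∧
      Nonempty ({F : Set ℕ // CyclicFlat M' F} ≃o L) := by
  obtain ⟨a, b, hab, hba⟩ := hL
  have : Nonempty L := ⟨a⟩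
  let : OrderBot L := Fintype.toOrderBot L
  obtain ⟨E, z, hE, hz⟩ := exists_blocks (α := ℕ) (L := L) (Fintype.card L + 3)
  have hblock : ∀ x, ∃ e ∈ E, z e = x := fun x =>
    nonempty_of_ncard_ne_zero (s := {e ∈ E | z e = x}) (by have := hz x; omega)
  obtain ⟨P, hPE, rfl⟩ := hblock a
  obtain ⟨Q, hQE, rfl⟩ := hblock b
  have hPQ : P ≠ Q := by rintro rfl; exact hab le_rfl
  have h₁ := admissible_principal (z := z) hE fun x => by have := hz x; omega
  have h₂ := admissible_twisted (z := z) (P := P) (Q := Q) (a := z P) (b := z Q) hE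
    fun x => by have := hz x; omega
  exact ⟨h₁.matroid, h₂.matroid, inferInstance, inferInstance, h₁.isTransversalMatroid,
    h₂.isTransversalMatroid, h₁.not_isIso h₂ cflat_principal_inter
      (cflat_twisted_inter_ne h₂ hPE hab hba),
    h₁.sameConfig h₂ (ncard_cflat_twisted hE hPE hQE hPQ rfl rfl),
    ⟨h₁.cyclicFlatIso.symm⟩, ⟨h₂.cyclicFlatIso.symm⟩⟩

end Paper
end
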